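/- arXiv:2201.04889 — 6 statements merged into one kernel-verified Lean document; each statement's English description precedes it below -/
import Mathlib

section
/- Let n ≥ 6. If n is divisible by 3, then the complement of C_n² contains a copy of the complete graph K_{n/3} but does not contain a copy of K_{n/3+1}⁻ (the complete graph on n/3+1 vertices minus one edge). If n is not divisible by 3, then the complement of C_n² contains a copy of K_{⌈n/3⌉}⁻. -/
/-- The 2-power `Cₙ²` of the cycle on `n` vertices: vertices are `ZMod n`, with
two distinct vertices adjacent iff their (cyclic) distance on the cycle is at most 2. -/
def cycleSq (n : ℕ) : SimpleGraph (ZMod n) :=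
  SimpleGraph.fromRel (fun u v => v - u = 1 ∨ v - u = 2)

/-- `Contains G F`: the graph `G` contains a (not necessarily induced) copy of `F`. -/
def Contains {V W : Type*} (G : SimpleGraph V) (F : SimpleGraph W) : Prop :=
  ∃ f : W ↪ V, ∀ ⦃a b⦄, F.Adj a b → G.Adj (f a) (f b)

/-- `K_m⁻`: the complete graph on `m` vertices minus one edge (the edge `{0,1}`). -/
def Kminus (m : ℕ) : SimpleGraph (Fin m) :=
  (⊤ : SimpleGraph (Fin m)) \ SimpleGraph.fromRel (fun u v => u.val = 0 ∧ v.val = 1)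

lemma compAdj (n : ℕ) (x y : ZMod n) :
    (cycleSq n)ᶜ.Adj x y ↔ x ≠ y ∧ x - y ≠ 1 ∧ x - y ≠ 2 ∧ y - x ≠ 1 ∧ y - x ≠ 2 := by
  simp only [SimpleGraph.compl_adj, cycleSq, SimpleGraph.fromRel_adj]
  tauto

lemma KminusAdj (m : ℕ) (a b : Fin m) :
    (Kminus m).Adj a b ↔ a ≠ b ∧ ¬((a.val = 0 ∧ b.val = 1) ∨ (b.val = 0 ∧ a.val = 1)) := by
  simp only [Kminus, SimpleGraph.sdiff_adj, SimpleGraph.top_adj, SimpleGraph.fromRel_adj]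
  tauto

lemma key (n : ℕ) (a b : ℤ) (h1 : 3 ≤ a - b) (h2 : a - b ≤ (n:ℤ) - 3) :
    ((a : ZMod n) ≠ b) ∧ ((a:ZMod n) - b ≠ 1 ∧ (a:ZMod n) - b ≠ 2 ∧
      (b:ZMod n) - a ≠ 1 ∧ (b:ZMod n) - a ≠ 2) := by
  have main : ∀ c : ℤ, -2 ≤ c → c ≤ 2 → ((a : ZMod n) - b ≠ (c:ZMod n)) := by
    intro c hc1 hc2 h
    have : ((a - b : ℤ) : ZMod n) = ((c : ℤ) : ZMod n) := by push_cast; rw [h]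
    rw [ZMod.intCast_eq_intCast_iff'] at this
    have hd : (n:ℤ) ∣ (a - b - c) := Int.ModEq.dvd (Int.ModEq.symm this)
    have := Int.le_of_dvd (by omega) hd
    omega
  refine ⟨?_, ?_, ?_, ?_, ?_⟩
  · intro h
    have := main 0 (by norm_num) (by norm_num)
    simp only [Int.cast_zero] at this
    exact this (by rw [h]; ring)
  · have := main 1 (by norm_num) (by norm_num); simpa using this
  · have := main 2 (by norm_num) (by norm_num); simpa using this
  · intro h
    have := main (-1) (by norm_num) (by norm_num)
    apply this; push_cast; linear_combination -h
  · intro h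
    have := main (-2) (by norm_num) (by norm_num)
    apply this; push_cast; linear_combination -h

lemma adjNat (n : ℕ) (a b : ℕ) (h1 : b + 3 ≤ a) (h2 : a + 3 ≤ b + n) :
    (cycleSq n)ᶜ.Adj ((a : ℕ) : ZMod n) ((b : ℕ) : ZMod n) := by
  obtain ⟨hne, c1, c2, c3, c4⟩ := key n (a:ℤ) b (by omega) (by omega)
  rw [compAdj]
  push_cast at hne c1 c2 c3 c4 ⊢
  exact ⟨hne, c1, c2, c3, c4⟩

lemma blocks (n m : ℕ) (hn : n = 3 * m) (hm : 1 ≤ m) (s : Fin m → ZMod n)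
    (hs : ∀ k k', k ≠ k' → s k ≠ s k' ∧ s k - s k' ≠ 1 ∧ s k - s k' ≠ 2 ∧
      s k' - s k ≠ 1 ∧ s k' - s k ≠ 2)
    (t : ZMod n) : ∃ (k : Fin m) (i : Fin 3), t = s k + ((i.val : ℕ) : ZMod n) := by
  have hne : NeZero n := ⟨by omega⟩
  have h3n : 3 ≤ n := by omega
  have hginj : Function.Injective
      (fun p : Fin m × Fin 3 => s p.1 + ((p.2.val : ℕ) : ZMod n)) := by
    rintro ⟨k, i⟩ ⟨k', i'⟩ h
    simp only at h
    by_cases hkk : k = k'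
    · subst hkk
      have hi : ((i.val : ℕ) : ZMod n) = ((i'.val : ℕ) : ZMod n) := by
        have := add_left_cancel h
        exact this
      have : (ZMod.val ((i.val : ℕ) : ZMod n)) = ZMod.val ((i'.val : ℕ) : ZMod n) := by
        rw [hi]
      rw [ZMod.val_cast_of_lt (by omega), ZMod.val_cast_of_lt (by omega)] at this
      have : i = i' := Fin.ext this
      rw [this]
    · exfalso
      obtain ⟨hne', c1, c2, c3, c4⟩ := hs k k' hkk
      fin_cases i <;> fin_cases i' <;> norm_num at h <;>
        first
          | exact hne' h
          | exact hne' (by linear_combination h)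
          | exact c1 (by linear_combination h)
          | exact c2 (by linear_combination h)
          | exact c3 (by linear_combination -h)
          | exact c4 (by linear_combination -h)
  have hcard : Fintype.card (Fin m × Fin 3) = Fintype.card (ZMod n) := by
    rw [ZMod.card n]
    simp [hn]
    ring
  have hbij := (Fintype.bijective_iff_injective_and_card _).mpr ⟨hginj, hcard⟩
  obtain ⟨⟨k, i⟩, hk⟩ := hbij.2 t
  exact ⟨k, i, hk.symm⟩

lemma noBig (n m : ℕ) (hn : 6 ≤ n) (hnm : n = 3 * m) :
    ¬ Contains (cycleSq n)ᶜ (Kminus (m + 1)) := by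
  rintro ⟨f, hf⟩
  have hm2 : 2 ≤ m := by omega
  have hP : ∀ a b : Fin (m + 1), a.val ≠ b.val →
      ¬((a.val = 0 ∧ b.val = 1) ∨ (b.val = 0 ∧ a.val = 1)) →
      f a ≠ f b ∧ f a - f b ≠ 1 ∧ f a - f b ≠ 2 ∧ f b - f a ≠ 1 ∧ f b - f a ≠ 2 := by
    intro a b hab hforb
    have := hf ((KminusAdj _ a b).mpr ⟨fun h => hab (congrArg Fin.val h), hforb⟩)
    exact (compAdj n (f a) (f b)).mp this
  set v0 : Fin (m + 1) := ⟨0, by omega⟩ with hv0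
  set v1 : Fin (m + 1) := ⟨1, by omega⟩ with hv1
  have hv0v : v0.val = 0 := rfl
  have hv1v : v1.val = 1 := rfl
  have key : ∀ w x : Fin (m + 1), ({w.val, x.val} : Set ℕ) = {0, 1} →
      (e : Fin m → Fin (m + 1)) → (∀ k, (e k).val ≠ x.val) →
      (∀ k, (e k).val ≠ 0 ∨ w.val = 0) →
      (∀ k, (e k).val = if k.val = 0 then w.val else k.val + 1) →
      ∃ i : ℕ, f x = f w + ((i : ℕ) : ZMod n) ∧ 1 ≤ i ∧ i ≤ 2 := by
    intro w x hwx e hex he0 heval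
    have hwxne : w.val ≠ x.val := by
      intro h
      have h0 : (0 : ℕ) ∈ ({w.val, x.val} : Set ℕ) := by rw [hwx]; left; rfl
      have h1 : (1 : ℕ) ∈ ({w.val, x.val} : Set ℕ) := by rw [hwx]; right; rfl
      simp only [Set.mem_insert_iff, Set.mem_singleton_iff] at h0 h1
      omega
    have hvalwx : (w.val = 0 ∧ x.val = 1) ∨ (w.val = 1 ∧ x.val = 0) := by
      have h0 : (0 : ℕ) ∈ ({w.val, x.val} : Set ℕ) := by rw [hwx]; left; rfl
      have h1 : (1 : ℕ) ∈ ({w.val, x.val} : Set ℕ) := by rw [hwx]; right; rfl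
      simp only [Set.mem_insert_iff, Set.mem_singleton_iff] at h0 h1
      omega
    obtain ⟨k, i, hki⟩ := blocks n m hnm (by omega) (fun k => f (e k))
      (by
        intro k k' hkk
        apply hP
        · rw [heval, heval]
          have : k.val ≠ k'.val := fun h => hkk (Fin.ext h)
          have hk := k.isLt; have hk' := k'.isLt
          split <;> split <;> omega
        · intro hc
          have h1 := hex k; have h2 := hex k'
          have h3 := he0 k; have h4 := he0 k'
          rcases hc with ⟨ha, hb⟩ | ⟨ha, hb⟩ <;> rcases h3 with h3 | h3 <;>
            rcases h4 with h4 | h4 <;> rw [heval] at * <;> split at ha <;>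
            split at hb <;> omega)
      (f x)
    have hd : f x - f (e k) = ((i.val : ℕ) : ZMod n) := by rw [hki]; ring
    by_cases hk0 : k.val = 0
    · have hek : e k = w := by
        apply Fin.ext; rw [heval]; simp [hk0]
      rw [hek] at hd
      refine ⟨i.val, by rw [hki, hek], ?_, by have := i.isLt; omega⟩
      by_contra hi0
      have hi0' : i.val = 0 := by omega
      rw [hi0'] at hd
      norm_num [sub_eq_zero] at hd
      exact hwxne (congrArg Fin.val hd).symm
    · exfalso
      have hekv : (e k).val = k.val + 1 := by rw [heval]; simp [hk0]
      have hxk : x.val ≠ (e k).val := fun h => (hex k) h.symm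
      have hP' := hP x (e k) hxk
        (by
          intro hc
          rcases he0 k with h3 | h3
          · rcases hc with ⟨ha, hb⟩ | ⟨ha, hb⟩ <;> omega
          · rcases hc with ⟨ha, hb⟩ | ⟨ha, hb⟩ <;> omega)
      obtain ⟨hne', c1, c2, c3, c4⟩ := hP'
      rcases i with ⟨iv, hiv⟩
      simp only [Fin.val_mk] at hd
      interval_cases iv
      · norm_num [sub_eq_zero] at hd
        exact hxk (congrArg Fin.val hd)
      · norm_num at hd
        exact c1 hd
      · norm_num at hd
        exact c2 hd
  -- family A : skip vertex v1
  obtain ⟨i, hA, hi1, hi2⟩ := key v0 v1 (by rw [hv0v, hv1v])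
    (fun k => ⟨if k.val = 0 then 0 else k.val + 1, by have := k.isLt; split <;> omega⟩)
    (by intro k
        show (if k.val = 0 then 0 else k.val + 1) ≠ v1.val
        rw [hv1v]; split <;> omega)
    (fun k => Or.inr hv0v)
    (by intro k
        show (if k.val = 0 then 0 else k.val + 1) = if k.val = 0 then v0.val else k.val + 1
        rw [hv0v])
  -- family B : skip vertex v0
  obtain ⟨j, hB, hj1, hj2⟩ := key v1 v0 (by rw [hv0v, hv1v]; exact Set.pair_comm 1 0)
    (fun k => ⟨if k.val = 0 then 1 else k.val + 1, by have := k.isLt; split <;> omega⟩)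
    (by intro k
        show (if k.val = 0 then 1 else k.val + 1) ≠ v0.val
        rw [hv0v]; split <;> omega)
    (by intro k
        refine Or.inl ?_
        show (if k.val = 0 then 1 else k.val + 1) ≠ 0
        split <;> omega)
    (by intro k
        show (if k.val = 0 then 1 else k.val + 1) = if k.val = 0 then v1.val else k.val + 1
        rw [hv1v])
  have hzero : ((i + j : ℕ) : ZMod n) = 0 := by
    push_cast
    linear_combination -hA - hB
  rw [ZMod.natCast_eq_zero_iff] at hzero
  have := Nat.le_of_dvd (by omega) hzero
  omega

lemma containsTop (n : ℕ) (hn : 6 ≤ n) (h3 : 3 ∣ n) :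
    Contains (cycleSq n)ᶜ (⊤ : SimpleGraph (Fin (n / 3))) := by
  obtain ⟨m, rfl⟩ := h3
  have hm : 2 ≤ m := by omega
  have adj : ∀ i j : Fin (3 * m / 3), i ≠ j →
      (cycleSq (3*m))ᶜ.Adj ((3 * i.val : ℕ) : ZMod (3*m)) ((3 * j.val : ℕ)) := by
    intro i j hij
    have hi : i.val < m := by have := i.isLt; omega
    have hj : j.val < m := by have := j.isLt; omega
    rcases Nat.lt_or_ge i.val j.val with h | h
    · exact (adjNat (3*m) (3*j.val) (3*i.val) (by omega) (by omega)).symm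
    · have : j.val < i.val := by
        rcases Nat.eq_or_lt_of_le h with h' | h'
        · exact absurd (Fin.ext h'.symm) hij
        · exact h'
      exact adjNat (3*m) (3*i.val) (3*j.val) (by omega) (by omega)
  refine ⟨⟨fun i => ((3 * i.val : ℕ) : ZMod (3*m)), fun i j h => ?_⟩, fun a b h => ?_⟩
  · by_contra hne
    exact ((cycleSq (3*m))ᶜ.ne_of_adj (adj i j hne)) h
  · exact adj a b h.ne

lemma containsKminus (n : ℕ) (hn : 6 ≤ n) (h3 : ¬ 3 ∣ n) :
    Contains (cycleSq n)ᶜ (Kminus ((n + 2) / 3)) := by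
  set m := (n + 2) / 3 with hm
  have hnm : 3 * m - 2 ≤ n ∧ n ≤ 3 * m - 1 ∧ 3 ≤ m := by omega
  set v : Fin m → ℕ := fun i => if i.val = 0 then 3*(m-1) else 3*(i.val-1) with hv
  have hvlt : ∀ i : Fin m, v i < n := by
    intro i
    have := i.isLt
    simp only [hv]
    split <;> omega
  have hinj : Function.Injective (fun i : Fin m => ((v i : ℕ) : ZMod n)) := by
    intro i j h
    simp only at h
    have : (ZMod.val ((v i : ℕ) : ZMod n)) = ZMod.val ((v j : ℕ) : ZMod n) := by rw [h]
    rw [ZMod.val_cast_of_lt (hvlt i), ZMod.val_cast_of_lt (hvlt j)] at this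
    have hi := i.isLt; have hj := j.isLt
    simp only [hv] at this
    apply Fin.ext
    split at this <;> split at this <;> omega
  refine ⟨⟨fun i => ((v i : ℕ) : ZMod n), hinj⟩, fun a b h => ?_⟩
  rw [KminusAdj] at h
  obtain ⟨hab, hforb⟩ := h
  have ha := a.isLt; have hb := b.isLt
  have habv : a.val ≠ b.val := fun h => hab (Fin.ext h)
  simp only [Function.Embedding.coeFn_mk]
  rcases Nat.eq_zero_or_pos a.val with ha0 | ha0
  · have hb2 : 2 ≤ b.val := by
      rcases Nat.eq_zero_or_pos b.val with h0 | h0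
      · omega
      · by_contra hc; exact hforb (Or.inl ⟨ha0, by omega⟩)
    have : v a = 3*(m-1) := by simp [hv, ha0]
    have hvb : v b = 3*(b.val-1) := by simp [hv]; omega
    rw [this, hvb]
    exact adjNat n (3*(m-1)) (3*(b.val-1)) (by omega) (by omega)
  · rcases Nat.eq_zero_or_pos b.val with hb0 | hb0
    · have ha2 : 2 ≤ a.val := by
        by_contra hc; exact hforb (Or.inr ⟨hb0, by omega⟩)
      have hvb : v b = 3*(m-1) := by simp [hv, hb0]
      have hva : v a = 3*(a.val-1) := by simp [hv]; omega
      rw [hva, hvb]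
      exact (adjNat n (3*(m-1)) (3*(a.val-1)) (by omega) (by omega)).symm
    · have hva : v a = 3*(a.val-1) := by simp [hv]; omega
      have hvb : v b = 3*(b.val-1) := by simp [hv]; omega
      rw [hva, hvb]
      rcases Nat.lt_or_ge a.val b.val with hlt | hge
      · exact (adjNat n (3*(b.val-1)) (3*(a.val-1)) (by omega) (by omega)).symm
      · exact adjNat n (3*(a.val-1)) (3*(b.val-1)) (by omega) (by omega)

/-- Let `n ≥ 6`. If `3 ∣ n`, the complement of `C_n²` contains a copy of
`K_{n/3}` but no copy of `K_{n/3+1}⁻`; if `3 ∤ n`, it contains a copy of `K_{⌈n/3⌉}⁻`. -/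
theorem stmt7 (n : ℕ) (hn : 6 ≤ n) :
    (3 ∣ n → Contains (cycleSq n)ᶜ (⊤ : SimpleGraph (Fin (n / 3))) ∧
      ¬ Contains (cycleSq n)ᶜ (Kminus (n / 3 + 1))) ∧
    (¬ 3 ∣ n → Contains (cycleSq n)ᶜ (Kminus ((n + 2) / 3))) := by
  refine ⟨fun h3 => ⟨containsTop n hn h3, noBig n (n / 3) hn (by omega)⟩,
    fun h3 => containsKminus n hn h3⟩
end

section
/- For n ≥ 6, the spectral radius of the graph K_n \ E(S_{n−3}) is strictly greater than n−2 (which equals the spectral radius of K_{n−1}). -/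
/-! The adjacency matrix of `K_n \ E(S_{n-3})` is `J - I - A_S`, with `A_S` that of the deleted
star (centre `c`, leaf set `L`), so its quadratic form is
`x ↦ (∑ x)² - ‖x‖² - 2 x_c ∑_{v ∈ L} x_v`. The largest eigenvalue of a symmetric matrix dominates
every Rayleigh quotient, so the test vector with weight `a` at the centre and `1` elsewhere gives
`μ ≥ ((n-1)(n-2) + 6a) / (n - 1 + a²)`, which exceeds `n - 2` whenever `0 < a < 6/(n-2)`;
we take `a = 3/(n-2)`. For `K_m` the quadratic form is `(∑ x)² - ‖x‖²`, so by Cauchy–Schwarz every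
Rayleigh quotient is at most `m - 1`, with equality at the all-ones vector; hence `μ = m - 1`. -/

/-- `K_n \ E(S_{n-3})`: the complete graph on `n` vertices minus the edges of a star
`S_{n-3}` with center `0` and leaves `1, …, n-4`. -/
def KnDelS (n : ℕ) : SimpleGraph (Fin n) :=
  ⊤ \ SimpleGraph.fromRel (fun u v => u.val = 0 ∧ 1 ≤ v.val ∧ v.val ≤ n - 4)

/-- `K_n \ E(S_{n-4} ∪ S_4)`: the complete graph on `n` vertices minus the edges of a star
`S_{n-4}` (center `0`, leaves `1, …, n-5`) and of a disjoint star `S_4` (center `n-4`,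
leaves `n-3, n-2, n-1`). -/
def KnDelSS (n : ℕ) : SimpleGraph (Fin n) :=
  ⊤ \ SimpleGraph.fromRel (fun u v =>
    (u.val = 0 ∧ 1 ≤ v.val ∧ v.val ≤ n - 5) ∨ (u.val = n - 4 ∧ n - 3 ≤ v.val))

/-- `K_n \ E(S_{n-4} ∪ K_3)`: the complete graph on `n` vertices minus the edges of a star
`S_{n-4}` (center `0`, leaves `1, …, n-5`) and of a disjoint triangle `K_3` on
`{n-3, n-2, n-1}`. -/
def KnDelSK (n : ℕ) : SimpleGraph (Fin n) :=
  ⊤ \ SimpleGraph.fromRel (fun u v =>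
    (u.val = 0 ∧ 1 ≤ v.val ∧ v.val ≤ n - 5) ∨ (n - 3 ≤ u.val ∧ n - 3 ≤ v.val))

/-- The spectral radius of a finite graph: the largest (real) eigenvalue of its
adjacency matrix, expressed as the supremum of the real spectrum. -/
noncomputable def specRad {V : Type*} [Fintype V] [DecidableEq V] (G : SimpleGraph V) : ℝ :=
  letI := Classical.decRel G.Adj
  sSup (spectrum ℝ (G.adjMatrix ℝ))

open Matrix Finset

open MatrixOrder in
theorem Matrix.IsHermitian.sSup_spectrum_le_iff {ι : Type*} [Fintype ι] [DecidableEq ι]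
    [Nonempty ι] {A : Matrix ι ι ℝ} (hA : A.IsHermitian) {c : ℝ} :
    sSup (spectrum ℝ A) ≤ c ↔ ∀ x, x ⬝ᵥ A *ᵥ x ≤ c * (x ⬝ᵥ x) := by
  have hne : (spectrum ℝ A).Nonempty := by
    rw [hA.spectrum_real_eq_range_eigenvalues]
    exact Set.range_nonempty _
  -- `sSup σ(A) ≤ c` iff `A ≤ c • 1` in the Loewner order, i.e. iff `c • 1 - A` is PSD.
  rw [csSup_le_iff A.finite_real_spectrum.bddAbove hne,
    ← le_algebraMap_iff_spectrum_le hA.isSelfAdjoint, Matrix.le_iff,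
    posSemidef_iff_dotProduct_mulVec, Algebra.algebraMap_eq_smul_one]
  have hsymm : (c • 1 - A).IsHermitian := (isHermitian_one.smul (IsSelfAdjoint.all c)).sub hA
  simp only [hsymm, true_and, star_trivial, sub_mulVec, smul_mulVec, one_mulVec, dotProduct_sub,
    dotProduct_smul, smul_eq_mul, sub_nonneg]

theorem Fintype.sum_update_one {V R : Type*} [Fintype V] [DecidableEq V] [Ring R] (c : V)
    (a : R) : ∑ v, Function.update (1 : V → R) c a v = a + (Fintype.card V - 1) := by
  have hrest : ∀ v ∈ ({c}ᶜ : Finset V), Function.update (1 : V → R) c a v = 1 := fun v hv =>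
    Function.update_of_ne (by simpa using hv) ..
  rw [Fintype.sum_eq_add_sum_compl c, Function.update_self, Finset.sum_congr rfl hrest,
    sum_const, card_compl, card_singleton, nsmul_one,
    Nat.cast_sub (Fintype.card_pos_iff.2 ⟨c⟩), Nat.cast_one]

section SpectralRadius

variable {V : Type*} [Fintype V] [DecidableEq V] (G : SimpleGraph V) [DecidableRel G.Adj]

theorem specRad_eq_sSup_spectrum : specRad G = sSup (spectrum ℝ (G.adjMatrix ℝ)) := by
  unfold specRad
  congr!

theorem specRad_le_iff [Nonempty V] {c : ℝ} :
    specRad G ≤ c ↔ ∀ x, x ⬝ᵥ G.adjMatrix ℝ *ᵥ x ≤ c * (x ⬝ᵥ x) := by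
  rw [specRad_eq_sSup_spectrum]
  exact (isHermitian_iff_isSymm.2 (G.isSymm_adjMatrix (α := ℝ))).sSup_spectrum_le_iff

theorem dotProduct_adjMatrix_mulVec_le_specRad_mul [Nonempty V] (x : V → ℝ) :
    x ⬝ᵥ G.adjMatrix ℝ *ᵥ x ≤ specRad G * (x ⬝ᵥ x) :=
  (specRad_le_iff G).1 le_rfl x

end SpectralRadius

namespace SimpleGraph

variable {V : Type*} [Fintype V] [DecidableEq V]

theorem dotProduct_top_adjMatrix_mulVec (x : V → ℝ) :
    x ⬝ᵥ (⊤ : SimpleGraph V).adjMatrix ℝ *ᵥ x = (∑ v, x v) ^ 2 - x ⬝ᵥ x := by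
  have hJ : (of 1 : Matrix V V ℝ) *ᵥ x = (∑ v, x v) • 1 := by
    ext
    simp [mulVec, dotProduct]
  rw [show (⊤ : SimpleGraph V).adjMatrix ℝ = of 1 - 1 from
      adjMatrix_completeGraph_eq_of_one_sub_one ℝ V,
    sub_mulVec, one_mulVec, dotProduct_sub, hJ, dotProduct_smul, dotProduct_one, smul_eq_mul, sq]

theorem dotProduct_compl_adjMatrix_mulVec (H : SimpleGraph V) [DecidableRel H.Adj]
    (x : V → ℝ) :
    x ⬝ᵥ Hᶜ.adjMatrix ℝ *ᵥ x = (∑ v, x v) ^ 2 - x ⬝ᵥ x - x ⬝ᵥ H.adjMatrix ℝ *ᵥ x := by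
  rw [← dotProduct_top_adjMatrix_mulVec,
    ← IsCompl.adjMatrix_add_adjMatrix_eq_adjMatrix_completeGraph ℝ (isCompl_compl (x := H)).symm,
    add_mulVec, dotProduct_add, add_sub_cancel_right]

theorem specRad_top [Nonempty V] : specRad (⊤ : SimpleGraph V) = Fintype.card V - 1 := by
  classical
  have hcard : (0 : ℝ) < Fintype.card V := by exact_mod_cast Fintype.card_pos
  refine le_antisymm ((specRad_le_iff _).2 fun x => ?_) ?_
  · have hcs := sq_sum_le_card_mul_sum_sq (s := univ) (f := x)
    have hxx : x ⬝ᵥ x = ∑ v, x v ^ 2 := by simp only [dotProduct, sq]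
    rw [card_univ] at hcs
    rw [dotProduct_top_adjMatrix_mulVec, hxx]
    linarith
  · have hones := dotProduct_adjMatrix_mulVec_le_specRad_mul (⊤ : SimpleGraph V) 1
    rw [dotProduct_top_adjMatrix_mulVec, one_dotProduct_one] at hones
    simp only [Pi.one_apply, sum_const, card_univ, nsmul_eq_mul, mul_one] at hones
    exact le_of_mul_le_mul_right (by linarith) hcard

def starGraphOn (c : V) (L : Finset V) : SimpleGraph V :=
  fromRel fun u v => u = c ∧ v ∈ L

theorem dotProduct_starGraphOn_adjMatrix_mulVec {c : V} {L : Finset V} (hc : c ∉ L)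
    [DecidableRel (starGraphOn c L).Adj] (x : V → ℝ) :
    x ⬝ᵥ (starGraphOn c L).adjMatrix ℝ *ᵥ x = 2 * x c * ∑ v ∈ L, x v := by
  have hsplit : ∀ u v, (if (starGraphOn c L).Adj u v then x u * x v else 0) =
      (if u = c ∧ v ∈ L then x u * x v else 0) + (if v = c ∧ u ∈ L then x u * x v else 0) := by
    intro u v
    by_cases hu : u = c <;> by_cases hv : v = c <;> by_cases huL : u ∈ L <;>
      by_cases hvL : v ∈ L <;> simp_all [starGraphOn, eq_comm]
  simp only [dotProduct_mulVec_adjMatrix, hsplit, sum_add_distrib, ite_and, sum_ite_irrel,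
    sum_const_zero, sum_ite_eq', mem_univ, if_true, sum_ite_mem, univ_inter, mul_sum]
  rw [← sum_add_distrib]
  exact sum_congr rfl fun _ _ => by ring

end SimpleGraph

open SimpleGraph

theorem knDelS_eq_compl_starGraphOn {n : ℕ} (hn : 2 ≤ n) :
    KnDelS n = (starGraphOn (⟨0, by omega⟩ : Fin n) (Icc ⟨1, by omega⟩ ⟨n - 4, by omega⟩))ᶜ := by
  rw [KnDelS, top_sdiff]
  congr 1
  ext u v
  simp [starGraphOn, Fin.le_def, Fin.ext_iff]

theorem sub_two_lt_specRad_knDelS {n : ℕ} (hn : 6 ≤ n) : (n : ℝ) - 2 < specRad (KnDelS n) := by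
  classical
  rw [knDelS_eq_compl_starGraphOn (by omega)]
  set c : Fin n := ⟨0, by omega⟩
  set L : Finset (Fin n) := Icc ⟨1, by omega⟩ ⟨n - 4, by omega⟩
  have : Nonempty (Fin n) := ⟨c⟩
  have hcL : c ∉ L := by simp [L, c, Fin.le_def]
  have hn2 : (0 : ℝ) < n - 2 := by
    have : (6 : ℝ) ≤ n := by exact_mod_cast hn
    linarith
  set a : ℝ := 3 / (n - 2)
  have ha : (n - 2) * a ^ 2 = 3 * a := by
    rw [show a = 3 / (n - 2) from rfl]
    field_simp
  set x := Function.update (1 : Fin n → ℝ) c a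
  have hxx : x ⬝ᵥ x = a ^ 2 + (n - 1) := by
    have hsq : ∀ v, x v * x v = Function.update (1 : Fin n → ℝ) c (a ^ 2) v := by
      intro v
      by_cases h : v = c <;> simp [x, h, sq]
    simp only [dotProduct, hsq, Fintype.sum_update_one, Fintype.card_fin]
  have hleaves : ∑ v ∈ L, x v = n - 4 := by
    have hone : ∀ v ∈ L, x v = 1 := fun v hv => by
      simp [x, Function.update_of_ne (ne_of_mem_of_not_mem hv hcL)]
    rw [sum_congr rfl hone, sum_const, nsmul_one, Fin.card_Icc]
    push_cast [Nat.cast_sub (by omega : 4 ≤ n)]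
    ring
  have hquad : x ⬝ᵥ (starGraphOn c L)ᶜ.adjMatrix ℝ *ᵥ x = (n - 1) * (n - 2) + 6 * a := by
    rw [dotProduct_compl_adjMatrix_mulVec, dotProduct_starGraphOn_adjMatrix_mulVec hcL, hxx,
      hleaves, Fintype.sum_update_one, Fintype.card_fin, show x c = a from Function.update_self ..]
    ring
  have hrayleigh := dotProduct_adjMatrix_mulVec_le_specRad_mul (starGraphOn c L)ᶜ x
  rw [hquad, hxx] at hrayleigh
  nlinarith [div_pos three_pos hn2]

/-- For `n ≥ 6`, the spectral radius of `K_n \ E(S_{n−3})` is strictly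
greater than `n − 2`, which equals the spectral radius of `K_{n−1}`. -/
theorem stmt8 (n : ℕ) (hn : 6 ≤ n) :
    specRad (⊤ : SimpleGraph (Fin (n - 1))) = (n : ℝ) - 2 ∧
    (n : ℝ) - 2 < specRad (KnDelS n) := by
  refine ⟨?_, sub_two_lt_specRad_knDelS hn⟩
  have : Nonempty (Fin (n - 1)) := ⟨⟨0, by omega⟩⟩
  rw [specRad_top, Fintype.card_fin, Nat.cast_sub (by omega)]
  ring
end

section
/- For n ≥ 18, the spectral radius of the graph K_{n−1}+e (the n-vertex graph obtained from K_{n−1} by adding one new vertex joined by a single edge to one vertex of K_{n−1}) is strictly less than the spectral radius of K_n \ E(S_{n−3}). -/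
/-- `K_{n−1} + e`: the graph on `n` vertices consisting of a complete graph on the `n − 1`
vertices `0, …, n−2` together with the vertex `n−1`, which is adjacent only to vertex `0`. -/
def KplusE (n : ℕ) : SimpleGraph (Fin n) :=
  SimpleGraph.fromRel (fun u v =>
    (u.val < n - 1 ∧ v.val < n - 1) ∨ (u.val = 0 ∧ v.val = n - 1))

open Matrix Finset

section Spectrum

variable {ι : Type*} [Fintype ι]

theorem Matrix.abs_eigenvalue_le_of_mulVec_le {A : Matrix ι ι ℝ} (hA : ∀ i j, 0 ≤ A i j)
    {y : ι → ℝ} (hy : ∀ i, 0 < y i) {c : ℝ} (hAy : ∀ i, (A *ᵥ y) i ≤ c * y i)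
    {μ : ℝ} {v : ι → ℝ} (hv : v ≠ 0) (hAv : A *ᵥ v = μ • v) : |μ| ≤ c := by
  obtain ⟨k, hk⟩ := Function.ne_iff.mp hv
  obtain ⟨i, -, hi⟩ := exists_max_image univ (fun j => |v j| / y j) ⟨k, mem_univ k⟩
  set t := |v i| / y i with ht
  have hvt : ∀ j, |v j| ≤ t * y j := fun j =>
    (div_le_iff₀ (hy j)).mp (hi j (mem_univ j))
  have hvi : 0 < |v i| := by
    have := (div_pos (abs_pos.mpr hk) (hy k)).trans_le (hi k (mem_univ k))
    exact (div_pos_iff_of_pos_right (hy i)).mp this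
  have key : |μ| * |v i| ≤ c * |v i| := calc
    |μ| * |v i| = |∑ j, A i j * v j| := by
      rw [← abs_mul, ← smul_eq_mul, ← Pi.smul_apply, ← hAv]; rfl
    _ ≤ ∑ j, A i j * (t * y j) := by
      refine (abs_sum_le_sum_abs _ _).trans (sum_le_sum fun j _ => ?_)
      rw [abs_mul, abs_of_nonneg (hA i j)]
      exact mul_le_mul_of_nonneg_left (hvt j) (hA i j)
    _ = t * (A *ᵥ y) i := by
      simp only [mulVec, dotProduct, mul_sum]
      exact sum_congr rfl fun j _ => by ring
    _ ≤ t * (c * y i) := mul_le_mul_of_nonneg_left (hAy i) (div_nonneg hvi.le (hy i).le)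
    _ = c * (t * y i) := mul_left_comm _ _ _
    _ = c * |v i| := by rw [ht, div_mul_cancel₀ _ (hy i).ne']
  exact le_of_mul_le_mul_right key hvi

variable [DecidableEq ι]

theorem Matrix.sSup_spectrum_le_of_mulVec_le [Nonempty ι] {A : Matrix ι ι ℝ}
    (hA : ∀ i j, 0 ≤ A i j) {y : ι → ℝ} (hy : ∀ i, 0 < y i) {c : ℝ}
    (hAy : ∀ i, (A *ᵥ y) i ≤ c * y i) : sSup (spectrum ℝ A) ≤ c := by
  have hc : 0 ≤ c := by
    obtain ⟨i⟩ := ‹Nonempty ι›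
    have : 0 ≤ (A *ᵥ y) i := sum_nonneg fun j _ => mul_nonneg (hA i j) (hy j).le
    exact nonneg_of_mul_nonneg_left (this.trans (hAy i)) (hy i)
  refine Real.sSup_le (fun μ hμ => ?_) hc
  rw [← spectrum_toLin', ← Module.End.hasEigenvalue_iff_mem_spectrum] at hμ
  obtain ⟨v, hv⟩ := hμ.exists_hasEigenvector
  rw [Module.End.hasEigenvector_iff, Module.End.mem_eigenspace_iff, toLin'_apply] at hv
  exact (le_abs_self μ).trans (abs_eigenvalue_le_of_mulVec_le hA hy hAy hv.2 hv.1)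

theorem Matrix.IsHermitian.dotProduct_mulVec_le_sSup_spectrum_mul {A : Matrix ι ι ℝ}
    (hA : A.IsHermitian) (x : ι → ℝ) :
    x ⬝ᵥ (A *ᵥ x) ≤ sSup (spectrum ℝ A) * (x ⬝ᵥ x) := by
  set μ := sSup (spectrum ℝ A)
  have hpsd : (algebraMap ℝ _ μ - A).PosSemidef := by
    refine posSemidef_iff_isHermitian_and_spectrum_nonneg.mpr
      ⟨(isHermitian_diagonal _).sub hA, ?_⟩
    rw [← spectrum.singleton_sub_eq]
    rintro _ ⟨_, rfl, ν, hν, rfl⟩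
    exact sub_nonneg.mpr (le_csSup A.finite_spectrum.bddAbove hν)
  have := hpsd.dotProduct_mulVec_nonneg x
  simpa only [star_trivial, sub_mulVec, dotProduct_sub, Algebra.algebraMap_eq_smul_one,
    smul_mulVec, one_mulVec, dotProduct_smul, smul_eq_mul, sub_nonneg] using this

end Spectrum

theorem Fintype.sum_eq_add_card_sub_one_mul {ι R : Type*} [Fintype ι] [DecidableEq ι] [Ring R]
    {f : ι → R} (a : ι) {c : R} (hf : ∀ j, j ≠ a → f j = c) :
    ∑ j, f j = f a + (Fintype.card ι - 1) * c := by
  rw [← add_sum_erase univ f (mem_univ a),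
    sum_eq_card_nsmul fun j hj => hf j (ne_of_mem_erase hj), card_erase_of_mem (mem_univ a),
    card_univ, nsmul_eq_mul, Nat.cast_sub (Fintype.card_pos_iff.mpr ⟨a⟩), Nat.cast_one]

namespace SimpleGraph

variable {V : Type*} [Fintype V] [DecidableEq V] (G : SimpleGraph V) [DecidableRel G.Adj]

theorem specRad_eq_sSup_spectrum : specRad G = sSup (spectrum ℝ (G.adjMatrix ℝ)) := by
  unfold specRad
  congr!

theorem specRad_le_of_adjMatrix_mulVec_le [Nonempty V] {y : V → ℝ} (hy : ∀ i, 0 < y i)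
    {c : ℝ} (hAy : ∀ i, (G.adjMatrix ℝ *ᵥ y) i ≤ c * y i) : specRad G ≤ c := by
  rw [specRad_eq_sSup_spectrum]
  refine sSup_spectrum_le_of_mulVec_le (fun i j => ?_) hy hAy
  rw [adjMatrix_apply]
  split_ifs <;> norm_num

theorem dotProduct_adjMatrix_mulVec_le_specRad_mul (x : V → ℝ) :
    x ⬝ᵥ (G.adjMatrix ℝ *ᵥ x) ≤ specRad G * (x ⬝ᵥ x) :=
  specRad_eq_sSup_spectrum G ▸
    (G.isHermitian_adjMatrix ℝ).dotProduct_mulVec_le_sSup_spectrum_mul x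

end SimpleGraph

open SimpleGraph

section KplusE

variable {n : ℕ}

theorem kplusE_adj_iff {i j : Fin n} :
    (KplusE n).Adj i j ↔
      i ≠ j ∧ (i.val = n - 1 → j.val = 0) ∧ (j.val = n - 1 → i.val = 0) := by
  simp only [KplusE, fromRel_adj, ne_eq, Fin.ext_iff]
  omega

variable [DecidableRel (KplusE n).Adj]

theorem kplusE_adjMatrix_mulVec_of_val_eq_zero (y : Fin n → ℝ) {i : Fin n} (hi : i.val = 0) :
    ((KplusE n).adjMatrix ℝ *ᵥ y) i = ∑ j, y j - y i := by
  rw [adjMatrix_mulVec_apply, ← sum_erase_eq_sub (mem_univ i)]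
  congr 1
  ext j
  simp only [mem_neighborFinset, kplusE_adj_iff, mem_erase, mem_univ, and_true, ne_eq, Fin.ext_iff]
  omega

theorem kplusE_adjMatrix_mulVec_of_val_eq_sub_one (y : Fin n → ℝ) {i u : Fin n}
    (hi : i.val = n - 1) (hu : u.val = 0) (hn : 2 ≤ n) :
    ((KplusE n).adjMatrix ℝ *ᵥ y) i = y u := by
  rw [adjMatrix_mulVec_apply, ← sum_singleton y u]
  congr 1
  ext j
  simp only [mem_neighborFinset, kplusE_adj_iff, mem_singleton, ne_eq, Fin.ext_iff]
  omega

theorem kplusE_adjMatrix_mulVec_of_ne (y : Fin n → ℝ) {i w : Fin n}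
    (hi₀ : i.val ≠ 0) (hi : i.val ≠ n - 1) (hw : w.val = n - 1) :
    ((KplusE n).adjMatrix ℝ *ᵥ y) i = ∑ j, y j - y w - y i := by
  have hiw : i ∈ univ.erase w := mem_erase.mpr ⟨fun h => hi (h ▸ hw), mem_univ i⟩
  rw [adjMatrix_mulVec_apply, ← sum_erase_eq_sub (mem_univ w), ← sum_erase_eq_sub hiw]
  congr 1
  ext j
  simp only [mem_neighborFinset, kplusE_adj_iff, mem_erase, mem_univ, and_true, ne_eq, Fin.ext_iff]
  omega

theorem specRad_kplusE_le (hn : 5 ≤ n) : specRad (KplusE n) ≤ n - 2 + 4 / n ^ 2 := by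
  have hn' : (5 : ℝ) ≤ n := by exact_mod_cast hn
  set u : Fin n := ⟨0, by omega⟩
  set w : Fin n := ⟨n - 1, by omega⟩
  have huw : u ≠ w := by simp only [u, w, ne_eq, Fin.ext_iff]; omega
  -- chosen so that the rows of the vertices other than `u` and `w` hold with equality
  set y : Fin n → ℝ := fun j =>
    n ^ 2 + (if j = u then 4 else 0) + (if j = w then 2 * (n : ℝ) - n ^ 2 else 0)
  have hyu : y u = n ^ 2 + 4 := by simp [y, huw]
  have hyw : y w = 2 * n := by simp [y, huw.symm]
  have hy : ∀ j, j ≠ u → j ≠ w → y j = n ^ 2 := fun j hju hjw => by simp [y, hju, hjw]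
  have hsum : ∑ j, y j = n ^ 3 - n ^ 2 + 2 * n + 4 := by
    simp only [y, sum_add_distrib, Fintype.sum_ite_eq', sum_const, card_univ, Fintype.card_fin,
      nsmul_eq_mul]
    ring
  have hpos : ∀ j, 0 < y j := fun j => by
    by_cases hju : j = u
    · rw [hju, hyu]; positivity
    by_cases hjw : j = w
    · rw [hjw, hyw]; positivity
    rw [hy j hju hjw]; positivity
  have : Nonempty (Fin n) := ⟨u⟩
  refine (KplusE n).specRad_le_of_adjMatrix_mulVec_le hpos fun i => ?_
  have hn2 : (0 : ℝ) < n ^ 2 := by positivity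
  by_cases hiu : i = u
  · rw [kplusE_adjMatrix_mulVec_of_val_eq_zero y (congrArg Fin.val hiu), hsum, hiu, hyu]
    field_simp
    nlinarith
  by_cases hiw : i = w
  · rw [kplusE_adjMatrix_mulVec_of_val_eq_sub_one y (u := u) (congrArg Fin.val hiw) rfl (by omega),
      hiw, hyu, hyw]
    field_simp
    nlinarith
  · rw [kplusE_adjMatrix_mulVec_of_ne y (fun h => hiu (Fin.ext h)) (fun h => hiw (Fin.ext h))
      (w := w) rfl, hsum, hyw, hy i hiu hiw]
    field_simp
    nlinarith

end KplusE

section KnDelS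

variable {n : ℕ}

theorem knDelS_adj_iff {i j : Fin n} :
    (KnDelS n).Adj i j ↔
      i ≠ j ∧ (i.val = 0 → n - 3 ≤ j.val) ∧ (j.val = 0 → n - 3 ≤ i.val) := by
  simp only [KnDelS, sdiff_adj, top_adj, fromRel_adj, ne_eq, Fin.ext_iff, not_and, not_or]
  omega

variable [DecidableRel (KnDelS n).Adj]

theorem knDelS_adjMatrix_mulVec_of_val_eq_zero (y : Fin n → ℝ) {i a : Fin n} (hi : i.val = 0)
    (ha : a.val = n - 3) (hn : 4 ≤ n) :
    ((KnDelS n).adjMatrix ℝ *ᵥ y) i = ∑ j ∈ Ici a, y j := by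
  rw [adjMatrix_mulVec_apply]
  congr 1
  ext j
  simp only [mem_neighborFinset, knDelS_adj_iff, mem_Ici, Fin.le_def, ne_eq, Fin.ext_iff]
  omega

theorem knDelS_adjMatrix_mulVec_of_val_lt (y : Fin n → ℝ) {i c : Fin n}
    (hi₀ : i.val ≠ 0) (hi : i.val < n - 3) (hc : c.val = 0) :
    ((KnDelS n).adjMatrix ℝ *ᵥ y) i = ∑ j, y j - y c - y i := by
  have hic : i ∈ univ.erase c := mem_erase.mpr ⟨fun h => hi₀ (h ▸ hc), mem_univ i⟩
  rw [adjMatrix_mulVec_apply, ← sum_erase_eq_sub (mem_univ c), ← sum_erase_eq_sub hic]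
  congr 1
  ext j
  simp only [mem_neighborFinset, knDelS_adj_iff, mem_erase, mem_univ, and_true, ne_eq, Fin.ext_iff]
  omega

theorem knDelS_adjMatrix_mulVec_of_le_val (y : Fin n → ℝ) {i : Fin n} (hi : n - 3 ≤ i.val) :
    ((KnDelS n).adjMatrix ℝ *ᵥ y) i = ∑ j, y j - y i := by
  rw [adjMatrix_mulVec_apply, ← sum_erase_eq_sub (mem_univ i)]
  congr 1
  ext j
  simp only [mem_neighborFinset, knDelS_adj_iff, mem_erase, mem_univ, and_true, ne_eq, Fin.ext_iff]
  omega

theorem lt_specRad_knDelS (hn : 4 ≤ n) : (n - 2 + 4 / n ^ 2 : ℝ) < specRad (KnDelS n) := by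
  have hn' : (4 : ℝ) ≤ n := by exact_mod_cast hn
  set c : Fin n := ⟨0, by omega⟩
  set a : Fin n := ⟨n - 3, by omega⟩
  have hca : ¬ a ≤ c := by simp only [Fin.le_def, a, c]; omega
  set x : Fin n → ℝ := fun j => if j = c then 3 else n
  have hxc : x c = 3 := if_pos rfl
  have hx : ∀ j, j ≠ c → x j = n := fun j hj => if_neg hj
  have hsum : ∑ j, x j = 3 + (n - 1) * n := by
    rw [Fintype.sum_eq_add_card_sub_one_mul c hx, hxc, Fintype.card_fin]
  have hsq : x ⬝ᵥ x = 9 + (n - 1) * n ^ 2 := by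
    rw [dotProduct, Fintype.sum_eq_add_card_sub_one_mul c (c := (n : ℝ) ^ 2)
      fun j hj => by rw [hx j hj, sq], hxc, Fintype.card_fin]
    norm_num
  have hsumR : ∑ j ∈ Ici a, x j = 3 * n := by
    rw [sum_congr rfl fun j hj => hx j (ne_of_mem_of_not_mem hj (by simpa using hca)),
      sum_const, Fin.card_Ici, nsmul_eq_mul]
    simp only [a]
    rw [Nat.sub_sub_self (by omega)]
    norm_num
  have hAx : ∀ i, ((KnDelS n).adjMatrix ℝ *ᵥ x) i =
      (n - 2) * x i + (if i = c then 6 else 0) + (if a ≤ i then 3 else 0) := by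
    intro i
    by_cases hic : i = c
    · rw [knDelS_adjMatrix_mulVec_of_val_eq_zero x (congrArg Fin.val hic) (a := a) rfl hn, hsumR,
        hic, hxc, if_pos rfl, if_neg hca]
      ring
    by_cases hia : a ≤ i
    · rw [knDelS_adjMatrix_mulVec_of_le_val x (Fin.le_def.mp hia), hsum, hx i hic, if_neg hic,
        if_pos hia]
      ring
    · rw [knDelS_adjMatrix_mulVec_of_val_lt x (fun h => hic (Fin.ext h))
        (by simp only [Fin.le_def, a, not_le] at hia; omega) (c := c) rfl, hsum, hxc, hx i hic,
        if_neg hic, if_neg hia]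
      ring
  have hxAx : x ⬝ᵥ ((KnDelS n).adjMatrix ℝ *ᵥ x) = (n - 2) * (x ⬝ᵥ x) + 18 + 9 * n := by
    simp only [dotProduct, hAx, mul_add, mul_ite, mul_zero, sum_add_distrib, Fintype.sum_ite_eq',
      hxc]
    rw [← sum_filter, filter_le_eq_Ici, ← sum_mul, hsumR, mul_sum]
    simp only [mul_left_comm (x _)]
    ring
  have hpos : 0 < x ⬝ᵥ x := by rw [hsq]; nlinarith
  refine lt_of_mul_lt_mul_right ?_ hpos.le
  calc (n - 2 + 4 / n ^ 2 : ℝ) * (x ⬝ᵥ x) < x ⬝ᵥ ((KnDelS n).adjMatrix ℝ *ᵥ x) := by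
        rw [hxAx, hsq]
        field_simp
        nlinarith
    _ ≤ specRad (KnDelS n) * (x ⬝ᵥ x) :=
        (KnDelS n).dotProduct_adjMatrix_mulVec_le_specRad_mul x

end KnDelS

/-- For `n ≥ 18`, `μ(K_{n−1} + e) < μ(K_n \ E(S_{n−3}))`. -/
theorem stmt9 (n : ℕ) (hn : 18 ≤ n) :
    specRad (KplusE n) < specRad (KnDelS n) := by
  classical
  exact (specRad_kplusE_le (by omega)).trans_lt (lt_specRad_knDelS (by omega))
end

section
/- For n ≥ 18, the spectral radius of the graph K_n \ E(S_{n−4} ∪ S_4) is strictly less than the spectral radius of K_n \ E(S_{n−3}). -/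
/-!
Split `Fin n` into the classes `{0}`, `{1, …, n-5}`, `{n-4}` and `{n-3, n-2, n-1}`. Both deleted
star forests are blow-ups of a graph on these four classes (the matching `{0,1}, {2,3}` for
`S_{n-4} ∪ S_4`, the path `1 - 0 - 2` for `S_{n-3}`), so on vectors that are constant on the
classes the adjacency matrices act through `4 × 4` computations. With `c = n - 2`, the positive
vector `y = (4, c, c, c)` satisfies `A y ≤ c y` for `K_n \ E(S_{n-4} ∪ S_4)`, which bounds its
spectral radius by `c` (Collatz–Wielandt), while `x = (1, c, c, c)` satisfies `A x ≥ c x` for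
`K_n \ E(S_{n-3})`, strictly at the centre `0`, so the Rayleigh quotient of `x` exceeds `c`.
-/

open Matrix Finset

namespace Matrix

variable {ι : Type*} [Fintype ι] [DecidableEq ι] {A : Matrix ι ι ℝ}

theorem IsHermitian.dotProduct_mulVec_le_sSup_spectrum_mul_s10 (hA : A.IsHermitian) (x : ι → ℝ) :
    x ⬝ᵥ (A *ᵥ x) ≤ sSup (spectrum ℝ A) * (x ⬝ᵥ x) := by
  set μ := sSup (spectrum ℝ A)
  have hpsd : (algebraMap ℝ _ μ - A).PosSemidef := by
    refine posSemidef_iff_isHermitian_and_spectrum_nonneg.2 ⟨?_, ?_⟩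
    · exact (isHermitian_diagonal_of_self_adjoint _ (.all _)).sub hA
    · rw [← spectrum.singleton_sub_eq, Set.singleton_sub]
      rintro _ ⟨ν, hν, rfl⟩
      exact sub_nonneg.2 (le_csSup A.finite_real_spectrum.bddAbove hν)
  have := hpsd.dotProduct_mulVec_nonneg x
  simp only [star_trivial, sub_mulVec, dotProduct_sub, Algebra.algebraMap_eq_smul_one,
    smul_mulVec, one_mulVec, dotProduct_smul, smul_eq_mul] at this
  linarith

theorem IsHermitian.lt_sSup_spectrum_of_lt_mulVec (hA : A.IsHermitian) {x : ι → ℝ} {t : ℝ}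
    (hx : ∀ i, 0 ≤ x i) (hle : ∀ i, t * x i ≤ (A *ᵥ x) i)
    (hlt : ∃ i, 0 < x i ∧ t * x i < (A *ᵥ x) i) : t < sSup (spectrum ℝ A) := by
  obtain ⟨i₀, hxi₀, hlti₀⟩ := hlt
  have hxx : 0 < x ⬝ᵥ x :=
    sum_pos' (fun i _ => mul_self_nonneg (x i)) ⟨i₀, mem_univ _, mul_pos hxi₀ hxi₀⟩
  have hgap : t * (x ⬝ᵥ x) < x ⬝ᵥ (A *ᵥ x) := by
    rw [dotProduct, dotProduct, mul_sum]
    refine sum_lt_sum (fun i _ => ?_) ⟨i₀, mem_univ _, ?_⟩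
    · nlinarith [hle i, hx i]
    · nlinarith
  have := hA.dotProduct_mulVec_le_sSup_spectrum_mul_s10 x
  by_contra! h
  nlinarith

theorem IsHermitian.le_of_mem_spectrum_of_mulVec_le (hA : A.IsHermitian)
    (hA₀ : ∀ i j, 0 ≤ A i j) {y : ι → ℝ} {t : ℝ} (hy : ∀ i, 0 < y i)
    (hAy : ∀ i, (A *ᵥ y) i ≤ t * y i) {μ : ℝ} (hμ : μ ∈ spectrum ℝ A) : μ ≤ t := by
  rw [hA.spectrum_real_eq_range_eigenvalues] at hμ
  obtain ⟨k, rfl⟩ := hμ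
  set v : ι → ℝ := ⇑(hA.eigenvectorBasis k)
  have hv : A *ᵥ v = hA.eigenvalues k • v := hA.mulVec_eigenvectorBasis k
  have hv₀ : v ≠ 0 := (WithLp.ofLp_eq_zero 2).ne.2 <| hA.eigenvectorBasis.orthonormal.ne_zero k
  set w : ι → ℝ := fun i => |v i|
  have hw : ∀ i, hA.eigenvalues k * w i ≤ (A *ᵥ w) i := fun i => by
    calc hA.eigenvalues k * w i ≤ |hA.eigenvalues k * v i| := by
          rw [abs_mul]; exact mul_le_mul_of_nonneg_right (le_abs_self _) (abs_nonneg _)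
      _ = |∑ j, A i j * v j| := by rw [← smul_eq_mul, ← Pi.smul_apply, ← hv]; rfl
      _ ≤ ∑ j, |A i j * v j| := abs_sum_le_sum_abs _ _
      _ = (A *ᵥ w) i := by simp [mulVec, dotProduct, abs_mul, abs_of_nonneg (hA₀ _ _), w]
  have hyw : 0 < y ⬝ᵥ w := by
    obtain ⟨j, hj⟩ := Function.ne_iff.1 hv₀
    exact sum_pos' (fun i _ => mul_nonneg (hy i).le (abs_nonneg _))
      ⟨j, mem_univ _, mul_pos (hy j) (abs_pos.2 hj)⟩
  have hsymm : y ⬝ᵥ (A *ᵥ w) = (A *ᵥ y) ⬝ᵥ w := by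
    have hAT : Aᵀ = A := by rw [← conjTranspose_eq_transpose_of_trivial]; exact hA
    rw [dotProduct_mulVec, ← mulVec_transpose, hAT]
  have hlow : hA.eigenvalues k * (y ⬝ᵥ w) ≤ y ⬝ᵥ (A *ᵥ w) := by
    rw [dotProduct, dotProduct, mul_sum]
    exact sum_le_sum fun i _ => by nlinarith [hw i, hy i]
  have hup : (A *ᵥ y) ⬝ᵥ w ≤ t * (y ⬝ᵥ w) := by
    rw [dotProduct, dotProduct, mul_sum]
    exact sum_le_sum fun i _ => by nlinarith [hAy i, abs_nonneg (v i)]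
  nlinarith

theorem IsHermitian.sSup_spectrum_le_of_mulVec_le [Nonempty ι] (hA : A.IsHermitian)
    (hA₀ : ∀ i j, 0 ≤ A i j) {y : ι → ℝ} {t : ℝ} (hy : ∀ i, 0 < y i)
    (hAy : ∀ i, (A *ᵥ y) i ≤ t * y i) : sSup (spectrum ℝ A) ≤ t := by
  refine csSup_le ?_ fun μ hμ => hA.le_of_mem_spectrum_of_mulVec_le hA₀ hy hAy hμ
  rw [hA.spectrum_real_eq_range_eigenvalues]
  exact Set.range_nonempty _

end Matrix

theorem specRad_eq_sSup_spectrum_s10 {V : Type*} [Fintype V] [DecidableEq V] (G : SimpleGraph V)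
    [DecidableRel G.Adj] : specRad G = sSup (spectrum ℝ (G.adjMatrix ℝ)) := by
  unfold specRad
  congr

namespace SimpleGraph

variable {V κ : Type*} [Fintype V] [DecidableEq V] [Fintype κ] [DecidableEq κ]

theorem top_sdiff_comap_adjMatrix_mulVec_comp (Q : SimpleGraph κ) [DecidableRel Q.Adj]
    (c : V → κ) [DecidableRel (⊤ \ Q.comap c).Adj] (z : κ → ℝ) (v : V) :
    ((⊤ \ Q.comap c).adjMatrix ℝ *ᵥ (z ∘ c)) v =
      ∑ b, (if Q.Adj (c v) b then 0 else (Fintype.card {u // c u = b} : ℝ) * z b) - z (c v) := by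
  set f : κ → ℝ := fun b => if Q.Adj (c v) b then 0 else z b
  have hrow : ((⊤ \ Q.comap c).adjMatrix ℝ *ᵥ (z ∘ c)) v = ∑ u ∈ univ.erase v, f (c u) := by
    rw [adjMatrix_mulVec_apply, neighborFinset_eq_filter, sum_filter, ← filter_ne' univ v,
      sum_filter]
    refine sum_congr rfl fun u _ => ?_
    by_cases huv : u = v
    · simp [huv]
    · by_cases hQ : Q.Adj (c v) (c u) <;> simp [f, huv, Ne.symm huv, hQ]
  have hfib : ∑ u, f (c u) = ∑ b, (Fintype.card {u // c u = b} : ℝ) * f b := by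
    rw [← Fintype.sum_fiberwise' c f]
    simp
  rw [hrow, ← add_sub_cancel_right (∑ u ∈ univ.erase v, f (c u)) (f (c v)),
    sum_erase_add _ _ (mem_univ v), hfib]
  simp [f, mul_ite]

end SimpleGraph

theorem Fin.card_filter_eq_card_of_val {n : ℕ} {p : Fin n → Prop} [DecidablePred p]
    {s : Finset ℕ} (hs : ∀ k ∈ s, k < n) (h : ∀ v : Fin n, p v ↔ ↑v ∈ s) : #{v | p v} = #s := by
  rw [← card_attachFin s hs]
  congr 1
  ext v
  simp [h]

def starClass (n : ℕ) (v : Fin n) : Fin 4 :=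
  if v.val = 0 then 0 else if v.val ≤ n - 5 then 1 else if v.val = n - 4 then 2 else 3

theorem card_starClass_fiber {n : ℕ} (hn : 5 ≤ n) (a : Fin 4) :
    Fintype.card {v // starClass n v = a} = ![1, n - 5, 1, 3] a := by
  rw [Fintype.card_subtype]
  fin_cases a
  · exact Fin.card_filter_eq_card_of_val (s := {0}) (by simp; omega)
      fun v => by unfold starClass; split_ifs <;> simp <;> omega
  · refine (Fin.card_filter_eq_card_of_val (s := Icc 1 (n - 5)) (fun k hk => by simp at hk; omega)
      fun v => by unfold starClass; split_ifs <;> simp <;> omega).trans ?_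
    simp
  · exact Fin.card_filter_eq_card_of_val (s := {n - 4}) (by simp; omega)
      fun v => by unfold starClass; split_ifs <;> simp <;> omega
  · refine (Fin.card_filter_eq_card_of_val (s := Ico (n - 3) n) (fun k hk => by simp at hk; omega)
      fun v => by unfold starClass; split_ifs <;> simp <;> omega).trans ?_
    simp
    omega

theorem KnDelSS_eq_top_sdiff_comap {n : ℕ} (hn : 5 ≤ n) :
    KnDelSS n = ⊤ \ (SimpleGraph.fromEdgeSet {s(0, 1), s(2, 3)}).comap (starClass n) := by
  unfold KnDelSS
  congr 1
  ext u v
  simp only [SimpleGraph.fromRel_adj, SimpleGraph.comap_adj, SimpleGraph.fromEdgeSet_adj,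
    Set.mem_insert_iff, Set.mem_singleton_iff, Sym2.eq_iff, ne_eq, Fin.ext_iff]
  unfold starClass
  split_ifs <;> simp <;> omega

theorem KnDelS_eq_top_sdiff_comap {n : ℕ} (hn : 5 ≤ n) :
    KnDelS n = ⊤ \ (SimpleGraph.fromEdgeSet {s(0, 1), s(0, 2)}).comap (starClass n) := by
  unfold KnDelS
  congr 1
  ext u v
  simp only [SimpleGraph.fromRel_adj, SimpleGraph.comap_adj, SimpleGraph.fromEdgeSet_adj,
    Set.mem_insert_iff, Set.mem_singleton_iff, Sym2.eq_iff, ne_eq, Fin.ext_iff]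
  unfold starClass
  split_ifs <;> simp <;> omega

theorem specRad_KnDelSS_le {n : ℕ} (hn : 6 ≤ n) : specRad (KnDelSS n) ≤ n - 2 := by
  classical
  have : Nonempty (Fin n) := ⟨⟨0, by omega⟩⟩
  have hn' : (6 : ℝ) ≤ n := by exact_mod_cast hn
  rw [KnDelSS_eq_top_sdiff_comap (by omega), specRad_eq_sSup_spectrum_s10]
  refine (SimpleGraph.isHermitian_adjMatrix _ _).sSup_spectrum_le_of_mulVec_le
    (fun _ _ => ite_nonneg zero_le_one le_rfl)
    (y := ![4, n - 2, n - 2, n - 2] ∘ starClass n) (fun v => ?_) (fun v => ?_)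
  · rw [Function.comp_apply]
    generalize starClass n v = a
    fin_cases a <;> simp <;> linarith
  · rw [SimpleGraph.top_sdiff_comap_adjMatrix_mulVec_comp]
    simp only [Fin.sum_univ_four, card_starClass_fiber (by omega : 5 ≤ n), Function.comp_apply]
    generalize starClass n v = a
    fin_cases a <;> simp [Nat.cast_sub (by omega : 5 ≤ n)] <;> nlinarith

theorem lt_specRad_KnDelS {n : ℕ} (hn : 5 ≤ n) : (n : ℝ) - 2 < specRad (KnDelS n) := by
  classical
  have hn' : (5 : ℝ) ≤ n := by exact_mod_cast hn
  set x : Fin n → ℝ := ![1, n - 2, n - 2, n - 2] ∘ starClass n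
  have hAx : ∀ v,
      ((⊤ \ (SimpleGraph.fromEdgeSet {s(0, 1), s(0, 2)}).comap (starClass n)).adjMatrix ℝ *ᵥ x) v =
        (![3 * (n - 2), (n - 2) ^ 2, (n - 2) ^ 2, (n - 2) ^ 2 + 1] : Fin 4 → ℝ) (starClass n v) := by
    intro v
    rw [SimpleGraph.top_sdiff_comap_adjMatrix_mulVec_comp]
    simp only [Fin.sum_univ_four, card_starClass_fiber hn]
    generalize starClass n v = a
    fin_cases a <;> simp [Nat.cast_sub hn] <;> ring
  rw [KnDelS_eq_top_sdiff_comap hn, specRad_eq_sSup_spectrum_s10]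
  refine (SimpleGraph.isHermitian_adjMatrix _ _).lt_sSup_spectrum_of_lt_mulVec
    (x := x) (fun v => ?_) (fun v => ?_) ⟨⟨0, by omega⟩, ?_⟩
  · simp only [x, Function.comp_apply]
    generalize starClass n v = a
    fin_cases a <;> simp <;> linarith
  · simp only [hAx, x, Function.comp_apply]
    generalize starClass n v = a
    fin_cases a <;> simp <;> nlinarith
  · simp only [hAx, x, Function.comp_apply, show starClass n ⟨0, _⟩ = 0 from if_pos rfl,
      Matrix.cons_val_zero]
    constructor <;> linarith

/-- For `n ≥ 18`, `μ(K_n \ E(S_{n−4} ∪ S_4)) < μ(K_n \ E(S_{n−3}))`. -/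
theorem stmt10 (n : ℕ) (hn : 18 ≤ n) :
    specRad (KnDelSS n) < specRad (KnDelS n) :=
  (specRad_KnDelSS_le (by omega)).trans_lt (lt_specRad_KnDelS (by omega))
end

section
/- For n ≥ 18, the spectral radius of the double star T_{n−5,2} equals (1/2)·√( 2n−4 + 2√(n²−12n+44) ), and this quantity is strictly greater than √(n−4) (and hence strictly greater than √(n−5)). -/
/-- The double star `T_{a,b}` on `a + b + 2` vertices: the adjacent centers are `0` and `1`,
vertex `0` has the `a` pendant leaves `2, …, a+1`, and vertex `1` has the `b` pendant
leaves `a+2, …, a+b+1`. -/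
def doubleStar (a b : ℕ) : SimpleGraph (Fin (a + b + 2)) :=
  SimpleGraph.fromRel (fun u v =>
    (u.val = 0 ∧ v.val = 1) ∨ (u.val = 0 ∧ 2 ≤ v.val ∧ v.val < a + 2) ∨
      (u.val = 1 ∧ a + 2 ≤ v.val))


lemma ds_adj_char (a : ℕ) (v u : Fin (a+2+2)) :
    (doubleStar a 2).Adj v u ↔
      ((v.val = 0 ∧ (u.val = 1 ∨ (2 ≤ u.val ∧ u.val < a+2))) ∨
       (v.val = 1 ∧ (u.val = 0 ∨ a+2 ≤ u.val)) ∨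
       (2 ≤ v.val ∧ v.val < a+2 ∧ u.val = 0) ∨
       (a+2 ≤ v.val ∧ u.val = 1)) := by
  have hu := u.isLt
  have hv := v.isLt
  simp only [doubleStar, SimpleGraph.fromRel_adj, ne_eq, Fin.ext_iff]
  omega

/-- extension of a vector on `Fin (a+2+2)` to `ℕ`, by zero -/
noncomputable def dsext (a : ℕ) (x : Fin (a+2+2) → ℝ) (i : ℕ) : ℝ :=
  if h : i < a+2+2 then x ⟨i, h⟩ else 0

lemma dsext_lt (a : ℕ) (x : Fin (a+2+2) → ℝ) (i : ℕ) (h : i < a+2+2) :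
    dsext a x i = x ⟨i, h⟩ := dif_pos h

/-- row condition function -/
noncomputable def dsrow (a : ℕ) (x : Fin (a+2+2) → ℝ) (vv : ℕ) (i : ℕ) : ℝ :=
  if ((vv = 0 ∧ (i = 1 ∨ (2 ≤ i ∧ i < a+2))) ∨
      (vv = 1 ∧ (i = 0 ∨ a+2 ≤ i)) ∨
      (2 ≤ vv ∧ vv < a+2 ∧ i = 0) ∨
      (a+2 ≤ vv ∧ i = 1)) then dsext a x i else 0

lemma ds_mulVec (a : ℕ) [DecidableRel (doubleStar a 2).Adj] (x : Fin (a+2+2) → ℝ)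
    (v : Fin (a+2+2)) :
    ((doubleStar a 2).adjMatrix ℝ).mulVec x v =
      if v.val = 0 then dsext a x 1 + ∑ i ∈ Finset.Ico 2 (a+2), dsext a x i
      else if v.val = 1 then dsext a x 0 + dsext a x (a+2) + dsext a x (a+3)
      else if v.val < a+2 then dsext a x 0
      else dsext a x 1 := by
  classical
  rw [SimpleGraph.adjMatrix_mulVec_apply]
  have h1 : (doubleStar a 2).neighborFinset v =
      Finset.univ.filter (fun u => (doubleStar a 2).Adj v u) := by
    ext u; simp [SimpleGraph.mem_neighborFinset]
  rw [h1, Finset.sum_filter]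
  have h2 : ∀ u : Fin (a+2+2),
      (if (doubleStar a 2).Adj v u then x u else 0) = dsrow a x v.val u.val := by
    intro u
    by_cases hadj : (doubleStar a 2).Adj v u
    · rw [if_pos hadj, dsrow, if_pos ((ds_adj_char a v u).mp hadj),
        dsext_lt a x u.val u.isLt, Fin.eta]
    · rw [if_neg hadj, dsrow, if_neg (fun h => hadj ((ds_adj_char a v u).mpr h))]
  rw [Finset.sum_congr rfl (fun u _ => h2 u), Fin.sum_univ_eq_sum_range (dsrow a x v.val)]
  have hv := v.isLt
  rcases Nat.lt_or_ge v.val 2 with hv2 | hv2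
  · rcases Nat.lt_or_ge v.val 1 with hv1 | hv1
    · -- v.val = 0
      have hv0 : v.val = 0 := by omega
      rw [if_pos hv0]
      have : ∀ i ∈ Finset.range (a+2+2),
          dsrow a x v.val i =
          (if i = 1 then dsext a x i else 0) +
          (if (2 ≤ i ∧ i < a+2) then dsext a x i else 0) := by
        intro i _
        rw [dsrow]
        split_ifs <;> first | ring1 | (exfalso; omega)
      rw [Finset.sum_congr rfl this, Finset.sum_add_distrib]
      congr 1
      · rw [Finset.sum_ite_eq' (Finset.range (a+2+2)) 1 (dsext a x)]
        rw [if_pos (by simp only [Finset.mem_range]; omega)]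
      · rw [← Finset.sum_filter]
        congr 1
        ext i
        simp only [Finset.mem_filter, Finset.mem_range, Finset.mem_Ico]
        omega
    · -- v.val = 1
      have hv1' : v.val = 1 := by omega
      rw [if_neg (by omega), if_pos hv1']
      have : ∀ i ∈ Finset.range (a+2+2),
          dsrow a x v.val i =
          (if i = 0 then dsext a x i else 0) +
          ((if i = a+2 then dsext a x i else 0) +
           (if i = a+3 then dsext a x i else 0)) := by
        intro i hi
        simp only [Finset.mem_range] at hi
        rw [dsrow]
        split_ifs <;> first | ring1 | (exfalso; omega)
      rw [Finset.sum_congr rfl this, Finset.sum_add_distrib, Finset.sum_add_distrib]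
      rw [Finset.sum_ite_eq' (Finset.range (a+2+2)) 0 (dsext a x),
        Finset.sum_ite_eq' (Finset.range (a+2+2)) (a+2) (dsext a x),
        Finset.sum_ite_eq' (Finset.range (a+2+2)) (a+3) (dsext a x)]
      rw [if_pos (by simp only [Finset.mem_range]; omega), if_pos (by simp only [Finset.mem_range]; omega), if_pos (by simp only [Finset.mem_range]; omega)]
      ring
  · rcases Nat.lt_or_ge v.val (a+2) with hva | hva
    · -- leaf of 0
      rw [if_neg (by omega), if_neg (by omega), if_pos hva]
      have : ∀ i ∈ Finset.range (a+2+2),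
          dsrow a x v.val i =
          (if i = 0 then dsext a x i else 0) := by
        intro i _
        rw [dsrow]
        split_ifs <;> first | ring1 | (exfalso; omega)
      rw [Finset.sum_congr rfl this,
        Finset.sum_ite_eq' (Finset.range (a+2+2)) 0 (dsext a x), if_pos (by simp only [Finset.mem_range]; omega)]
    · -- leaf of 1
      rw [if_neg (by omega), if_neg (by omega), if_neg (by omega)]
      have : ∀ i ∈ Finset.range (a+2+2),
          dsrow a x v.val i =
          (if i = 1 then dsext a x i else 0) := by
        intro i _
        rw [dsrow]
        split_ifs <;> first | ring1 | (exfalso; omega)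
      rw [Finset.sum_congr rfl this,
        Finset.sum_ite_eq' (Finset.range (a+2+2)) 1 (dsext a x), if_pos (by simp only [Finset.mem_range]; omega)]
open Matrix Module.End in
lemma mem_spectrum_iff_exists {N : ℕ} (A : Matrix (Fin N) (Fin N) ℝ) (l : ℝ) :
    l ∈ spectrum ℝ A ↔ ∃ x : Fin N → ℝ, x ≠ 0 ∧ A.mulVec x = l • x := by
  rw [← AlgEquiv.spectrum_eq (Matrix.toLinAlgEquiv' (R := ℝ) (n := Fin N)) A,
    ← Module.End.hasEigenvalue_iff_mem_spectrum]
  constructor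
  · intro h
    obtain ⟨x, hx, hx0⟩ := h.exists_hasEigenvector
    exact ⟨x, hx0, by simpa [Matrix.toLinAlgEquiv'_apply, Matrix.toLin'_apply] using
      Module.End.mem_eigenspace_iff.mp hx⟩
  · rintro ⟨x, hx0, hx⟩
    exact Module.End.hasEigenvalue_of_hasEigenvector ⟨Module.End.mem_eigenspace_iff.mpr
      (by simpa [Matrix.toLinAlgEquiv'_apply, Matrix.toLin'_apply] using hx), hx0⟩

lemma ds_sum_const (a : ℕ) (c : ℝ) : ∑ _i ∈ Finset.Ico 2 (a+2), c = a * c := by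
  rw [Finset.sum_const, Nat.card_Ico, nsmul_eq_mul]
  norm_num

/-- membership: a nonzero root of the quartic is in the spectrum -/
lemma ds_spec_mem (a : ℕ) [DecidableRel (doubleStar a 2).Adj] (l : ℝ) (hl : l ≠ 0)
    (hq : l^4 - ((a:ℝ)+3)*l^2 + 2*a = 0) :
    l ∈ spectrum ℝ ((doubleStar a 2).adjMatrix ℝ) := by
  rw [mem_spectrum_iff_exists]
  set x : Fin (a+2+2) → ℝ := fun v =>
    if v.val = 0 then l*(l^2-2) else if v.val = 1 then l^2
    else if v.val < a+2 then l^2-2 else l with hxdef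
  have hX : ∀ i : ℕ, ∀ h : i < a+2+2, dsext a x i =
      (if i = 0 then l*(l^2-2) else if i = 1 then l^2
       else if i < a+2 then l^2-2 else l) := by
    intro i h
    rw [dsext_lt a x i h]
  refine ⟨x, ?_, ?_⟩
  · intro hx0
    have h1 : x ⟨1, by omega⟩ = 0 := by rw [hx0]; rfl
    have : l^2 = 0 := by simpa [hxdef] using h1
    exact hl (by nlinarith)
  · have g0 : dsext a x 0 = l*(l^2-2) := by rw [hX 0 (by omega), if_pos rfl]
    have g1 : dsext a x 1 = l^2 := by rw [hX 1 (by omega)]; norm_num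
    have ga2 : dsext a x (a+2) = l := by
      rw [hX (a+2) (by omega), if_neg (by omega), if_neg (by omega), if_neg (by omega)]
    have ga3 : dsext a x (a+3) = l := by
      rw [hX (a+3) (by omega), if_neg (by omega), if_neg (by omega), if_neg (by omega)]
    have hsum : ∑ i ∈ Finset.Ico 2 (a+2), dsext a x i = a * (l^2-2) := by
      calc ∑ i ∈ Finset.Ico 2 (a+2), dsext a x i
          = ∑ i ∈ Finset.Ico 2 (a+2), (l^2-2) := by
            refine Finset.sum_congr rfl (fun i hi => ?_)
            simp only [Finset.mem_Ico] at hi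
            rw [hX i (by omega), if_neg (by omega), if_neg (by omega), if_pos (by omega)]
        _ = a * (l^2-2) := ds_sum_const a _
    funext v
    rcases v with ⟨i, hvi⟩
    rw [ds_mulVec a x ⟨i, hvi⟩]
    show (if i = 0 then dsext a x 1 + ∑ j ∈ Finset.Ico 2 (a+2), dsext a x j
      else if i = 1 then dsext a x 0 + dsext a x (a+2) + dsext a x (a+3)
      else if i < a+2 then dsext a x 0 else dsext a x 1)
     = l * (if i = 0 then l*(l^2-2) else if i = 1 then l^2
       else if i < a+2 then l^2-2 else l)
    rw [g0, g1, ga2, ga3, hsum]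
    split_ifs <;> first | ring1 | linear_combination hq | linear_combination -hq | (exfalso; omega)

/-- every spectral value is zero or a root of the quartic -/
lemma ds_spec_sub (a : ℕ) [DecidableRel (doubleStar a 2).Adj] (l : ℝ)
    (hl : l ∈ spectrum ℝ ((doubleStar a 2).adjMatrix ℝ)) :
    l = 0 ∨ l^4 - ((a:ℝ)+3)*l^2 + 2*a = 0 := by
  by_cases hl0 : l = 0
  · exact Or.inl hl0
  right
  rw [mem_spectrum_iff_exists] at hl
  obtain ⟨x, hxne, heig⟩ := hl
  set X := dsext a x with hXdef
  have key : ∀ i : ℕ, ∀ h : i < a+2+2,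
      (if i = 0 then X 1 + ∑ j ∈ Finset.Ico 2 (a+2), X j
       else if i = 1 then X 0 + X (a+2) + X (a+3)
       else if i < a+2 then X 0 else X 1) = l * X i := by
    intro i h
    have := congrFun heig ⟨i, h⟩
    rw [ds_mulVec a x ⟨i, h⟩] at this
    have hv : (⟨i, h⟩ : Fin (a+2+2)).val = i := rfl
    rw [hv] at this
    have hx : x ⟨i, h⟩ = X i := (dsext_lt a x i h).symm
    calc _ = ((doubleStar a 2).adjMatrix ℝ).mulVec x ⟨i, h⟩ := by
            rw [ds_mulVec a x ⟨i, h⟩, hv]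
      _ = (l • x) ⟨i, h⟩ := congrFun heig _
      _ = l * X i := by rw [Pi.smul_apply, smul_eq_mul, hx]
  have E0 : X 1 + ∑ j ∈ Finset.Ico 2 (a+2), X j = l * X 0 := by
    have := key 0 (by omega); simpa using this
  have E1 : X 0 + X (a+2) + X (a+3) = l * X 1 := by
    have := key 1 (by omega); simpa using this
  have EL : ∀ i : ℕ, 2 ≤ i → i < a+2 → X 0 = l * X i := by
    intro i h2 ha
    have := key i (by omega)
    rwa [if_neg (by omega), if_neg (by omega), if_pos (by omega)] at this
  have EM2 : X 1 = l * X (a+2) := by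
    have := key (a+2) (by omega)
    rwa [if_neg (by omega), if_neg (by omega), if_neg (by omega)] at this
  have EM3 : X 1 = l * X (a+3) := by
    have := key (a+3) (by omega)
    rwa [if_neg (by omega), if_neg (by omega), if_neg (by omega)] at this
  have Esum : l * ∑ j ∈ Finset.Ico 2 (a+2), X j = a * X 0 := by
    calc l * ∑ j ∈ Finset.Ico 2 (a+2), X j
        = ∑ j ∈ Finset.Ico 2 (a+2), (l * X j) := Finset.mul_sum _ _ _
      _ = ∑ _j ∈ Finset.Ico 2 (a+2), X 0 := by
          refine Finset.sum_congr rfl (fun i hi => ?_)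
          simp only [Finset.mem_Ico] at hi
          exact (EL i hi.1 hi.2).symm
      _ = a * X 0 := ds_sum_const a _
  -- if X 0 = 0 then everything is zero
  have hX0 : X 0 ≠ 0 := by
    intro h0
    have h1 : X 1 = 0 := by
      have := congrArg (l * ·) E0
      have h2 : l * X 1 + l * ∑ j ∈ Finset.Ico 2 (a+2), X j = l * (l * X 0) := by
        rw [← this]; ring
      rw [Esum, h0] at h2
      have : l * X 1 = 0 := by linarith [h2]
      exact (mul_eq_zero.mp this).resolve_left hl0
    apply hxne
    funext v
    have hv := v.isLt
    have hxv : x v = X v.val := by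
      rw [hXdef, dsext_lt a x v.val v.isLt, Fin.eta]
    rw [hxv]
    show X v.val = 0
    rcases Nat.lt_or_ge v.val 2 with hv2 | hv2
    · rcases Nat.lt_or_ge v.val 1 with hv1 | hv1
      · rw [show v.val = 0 by omega]; exact h0
      · rw [show v.val = 1 by omega]; exact h1
    · rcases Nat.lt_or_ge v.val (a+2) with hva | hva
      · have := EL v.val hv2 hva
        rw [h0] at this
        exact ((mul_eq_zero.mp this.symm).resolve_left hl0)
      · rcases Nat.lt_or_ge v.val (a+3) with hvb | hvb
        · rw [show v.val = a+2 by omega]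
          rw [h1] at EM2
          exact ((mul_eq_zero.mp EM2.symm).resolve_left hl0)
        · rw [show v.val = a+3 by omega]
          rw [h1] at EM3
          exact ((mul_eq_zero.mp EM3.symm).resolve_left hl0)
  -- derive the two center equations
  have A1 : l * X 1 + (a:ℝ) * X 0 = l^2 * X 0 := by
    have := congrArg (l * ·) E0
    have h2 : l * X 1 + l * ∑ j ∈ Finset.Ico 2 (a+2), X j = l * (l * X 0) := by
      rw [← this]; ring
    rw [Esum] at h2
    linarith [h2]
  have B1 : l * X 0 + 2 * X 1 = l^2 * X 1 := by
    have := congrArg (l * ·) E1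
    have h2 : l * X 0 + l * X (a+2) + l * X (a+3) = l * (l * X 1) := by
      rw [← this]; ring
    rw [← EM2, ← EM3] at h2
    linarith [h2]
  have hX1 : X 1 ≠ 0 := by
    intro h1
    apply hX0
    rw [h1] at B1
    have : l * X 0 = 0 := by linarith
    exact (mul_eq_zero.mp this).resolve_left hl0
  have hfac : (l^4 - ((a:ℝ)+3)*l^2 + 2*a) * (X 0 * X 1) = 0 := by
    linear_combination (-(l^2-2)*X 1) * A1 - l*X 1 * B1
  rcases mul_eq_zero.mp hfac with h | h
  · exact h
  · exact absurd h (mul_ne_zero hX0 hX1)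


/-- For `n ≥ 18`, the spectral radius of the double star `T_{n−5,2}`
equals `(1/2)·√(2n − 4 + 2·√(n² − 12n + 44))`, and this quantity is strictly greater than
`√(n−4)`, hence strictly greater than `√(n−5)`. -/
theorem stmt13 (n : ℕ) (hn : 18 ≤ n) :
    specRad (doubleStar (n - 5) 2) =
      (1 / 2) * Real.sqrt (2 * (n : ℝ) - 4 + 2 * Real.sqrt ((n : ℝ) ^ 2 - 12 * n + 44)) ∧
    Real.sqrt ((n : ℝ) - 4) < specRad (doubleStar (n - 5) 2) ∧
    Real.sqrt ((n : ℝ) - 5) < specRad (doubleStar (n - 5) 2) := by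
  have hn5 : (5:ℕ) ≤ n := by omega
  have hcast : ((n - 5 : ℕ) : ℝ) = (n:ℝ) - 5 := by
    push_cast [hn5]; ring
  have hnn : (18:ℝ) ≤ (n:ℝ) := by exact_mod_cast hn
  set s := Real.sqrt ((n:ℝ)^2 - 12*n + 44) with hsdef
  have hs2 : s^2 = (n:ℝ)^2 - 12*n + 44 := Real.sq_sqrt (by nlinarith)
  have hs0 : 0 ≤ s := Real.sqrt_nonneg _
  set μ := (1/2) * Real.sqrt (2*(n:ℝ) - 4 + 2*s) with hμdef
  have harg : 0 ≤ 2*(n:ℝ) - 4 + 2*s := by nlinarith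
  have hsq : (Real.sqrt (2*(n:ℝ) - 4 + 2*s))^2 = 2*(n:ℝ) - 4 + 2*s := Real.sq_sqrt harg
  have hμ2 : μ^2 = ((n:ℝ) - 2 + s)/2 := by
    rw [hμdef, mul_pow, hsq]; ring
  have hμpos : 0 < μ := by
    rw [hμdef]
    apply mul_pos (by norm_num)
    apply Real.sqrt_pos.mpr
    nlinarith
  have hq : μ^4 - ((n:ℝ)-2)*μ^2 + (2*(n:ℝ)-10) = 0 := by
    linear_combination (μ^2 + ((n:ℝ)-2+s)/2 - ((n:ℝ)-2)) * hμ2 + (1/4)*hs2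
  letI : DecidableRel (doubleStar (n-5) 2).Adj := Classical.decRel _
  have hspec : specRad (doubleStar (n-5) 2) = μ := by
    unfold specRad
    apply IsGreatest.csSup_eq
    constructor
    · apply ds_spec_mem (n-5) μ (ne_of_gt hμpos)
      rw [hcast]
      linear_combination hq
    · intro l hl
      rcases ds_spec_sub (n-5) l hl with h0 | hql
      · rw [h0]; exact le_of_lt hμpos
      · rw [hcast] at hql
        have hfac : (l^2 - μ^2) * (l^2 - (μ^2 - s)) = 0 := by
          linear_combination hql + (-2*l^2 + ((n:ℝ)-2) + μ^2 - ((n:ℝ)-2+s)/2) * hμ2 - (1/4)*hs2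
        rcases mul_eq_zero.mp hfac with h | h
        · nlinarith [hμpos]
        · nlinarith [hμpos, hs0]
  have hlt : Real.sqrt ((n:ℝ) - 4) < μ := by
    rw [Real.sqrt_lt' hμpos, hμ2]
    nlinarith [hs2, hs0, hnn]
  refine ⟨hspec, by rw [hspec]; exact hlt, ?_⟩
  rw [hspec]
  calc Real.sqrt ((n:ℝ) - 5) ≤ Real.sqrt ((n:ℝ) - 4) := Real.sqrt_le_sqrt (by linarith)
    _ < μ := hlt
end

section
/- If F is a simple graph with no isolated vertices, minimum degree at least 4, and exactly 13 edges, then F is isomorphic to the join K̄_2 ∨ K_4⁻ of the empty graph on 2 vertices with the complete graph K_4 minus one edge. Moreover, there is no simple graph with no isolated vertices, minimum degree at least 5, and exactly 16 edges. -/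
/-- The join `G ∨ H` of two disjoint graphs: their disjoint union together with all edges
between the two sides. -/
def joinG {α β : Type*} (G : SimpleGraph α) (H : SimpleGraph β) : SimpleGraph (α ⊕ β) :=
  SimpleGraph.sum G H ⊔ SimpleGraph.fromRel (fun x y => x.isLeft = true ∧ y.isRight = true)

/-- `K̄_2 ∨ K_4⁻`: the join of the empty graph on two vertices with `K_4` minus an edge. -/
def K2barJoinK4minus : SimpleGraph (Fin 2 ⊕ Fin 4) := joinG (⊥ : SimpleGraph (Fin 2)) (Kminus 4)

universe u v

open SimpleGraph Finset Sum in
/-- Adjacency in `K2barJoinK4minus`, explicitly. -/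
lemma stmt18_Gadj (x y : Fin 2 ⊕ Fin 4) : K2barJoinK4minus.Adj x y ↔ x ≠ y ∧
    ¬((x = inl 0 ∧ y = inl 1) ∨ (x = inl 1 ∧ y = inl 0) ∨
      (x = inr 0 ∧ y = inr 1) ∨ (x = inr 1 ∧ y = inr 0)) := by
  rcases x with x | x <;> rcases y with y | y <;> fin_cases x <;> fin_cases y <;>
    simp [K2barJoinK4minus, joinG, Kminus, SimpleGraph.sum, SimpleGraph.fromRel_adj] <;> decide

open SimpleGraph in
lemma stmt18_ncard_nbhd {V : Type*} [Fintype V] (F : SimpleGraph V) [DecidableRel F.Adj]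
    (v : V) : (F.neighborSet v).ncard = F.degree v := by
  rw [← card_neighborSet_eq_degree, Set.ncard_eq_toFinset_card', Set.toFinset_card]

open SimpleGraph in
lemma stmt18_ncard_edges {V : Type*} [Fintype V] (F : SimpleGraph V) [DecidableRel F.Adj]
    [DecidableEq V] : F.edgeSet.ncard = F.edgeFinset.card := by
  rw [edgeFinset, Set.ncard_eq_toFinset_card']

open SimpleGraph in
lemma stmt18_two_le_degree {V : Type*} [Fintype V] (H : SimpleGraph V) [DecidableRel H.Adj]
    {u x y : V} (hx : H.Adj u x) (hy : H.Adj u y) (hxy : x ≠ y) : 2 ≤ H.degree u := by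
  rw [degree]
  exact Finset.one_lt_card.2 ⟨x, (H.mem_neighborFinset u x).2 hx,
    y, (H.mem_neighborFinset u y).2 hy, hxy⟩

open SimpleGraph Finset in
/-- A graph on 6 vertices with maximum degree at most 1 and exactly two edges is a
matching with two edges and two isolated vertices. -/
lemma stmt18_matching_struct {V : Type*} [Fintype V] [DecidableEq V] (H : SimpleGraph V)
    [DecidableRel H.Adj] (hcard : Fintype.card V = 6) (hdeg : ∀ v, H.degree v ≤ 1)
    (hedge : H.edgeFinset.card = 2) :
    ∃ a b c d e f : V, a ≠ b ∧ a ≠ c ∧ a ≠ d ∧ a ≠ e ∧ a ≠ f ∧ b ≠ c ∧ b ≠ d ∧ b ≠ e ∧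
      b ≠ f ∧ c ≠ d ∧ c ≠ e ∧ c ≠ f ∧ d ≠ e ∧ d ≠ f ∧ e ≠ f ∧
      (∀ v : V, v = a ∨ v = b ∨ v = c ∨ v = d ∨ v = e ∨ v = f) ∧
      (∀ u v, H.Adj u v ↔ (u = a ∧ v = b) ∨ (u = b ∧ v = a) ∨ (u = c ∧ v = d) ∨
        (u = d ∧ v = c)) := by
  obtain ⟨e1, e2, hne, hE⟩ := Finset.card_eq_two.1 hedge
  induction e1 using Sym2.ind with | _ a b => ?_
  induction e2 using Sym2.ind with | _ c d => ?_
  have hab : H.Adj a b :=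
    H.mem_edgeSet.1 (mem_edgeFinset.1 (hE ▸ Finset.mem_insert_self _ _))
  have hcd : H.Adj c d :=
    H.mem_edgeSet.1 (mem_edgeFinset.1
      (hE ▸ Finset.mem_insert_of_mem (Finset.mem_singleton_self _)))
  have hab' : a ≠ b := hab.ne
  have hcd' : c ≠ d := hcd.ne
  have hac : a ≠ c := by
    rintro rfl
    have hbd : b ≠ d := by rintro rfl; exact hne rfl
    exact absurd (hdeg a) (by have := stmt18_two_le_degree H hab hcd hbd; omega)
  have had : a ≠ d := by
    rintro rfl
    have hbc : b ≠ c := by rintro rfl; exact hne (Sym2.eq_swap)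
    exact absurd (hdeg a) (by have := stmt18_two_le_degree H hab hcd.symm hbc; omega)
  have hbc : b ≠ c := by
    rintro rfl
    have : a ≠ d := by rintro rfl; exact hne (Sym2.eq_swap)
    exact absurd (hdeg b) (by have := stmt18_two_le_degree H hab.symm hcd this; omega)
  have hbd : b ≠ d := by
    rintro rfl
    have : a ≠ c := by rintro rfl; exact hne rfl
    exact absurd (hdeg b) (by have := stmt18_two_le_degree H hab.symm hcd.symm this; omega)
  have hcard4 : ({a, b, c, d} : Finset V).card = 4 := by
    rw [card_insert_of_notMem (by simp [hab', hac, had]),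
      card_insert_of_notMem (by simp [hbc, hbd]),
      card_insert_of_notMem (by simp [hcd']), card_singleton]
  have hR : (univ \ ({a, b, c, d} : Finset V)).card = 2 := by
    rw [Finset.card_sdiff_of_subset (Finset.subset_univ _), Finset.card_univ, hcard, hcard4]
  obtain ⟨e, f, hef, hRef⟩ := Finset.card_eq_two.1 hR
  have he : e ∈ univ \ ({a, b, c, d} : Finset V) := hRef ▸ Finset.mem_insert_self _ _
  have hf : f ∈ univ \ ({a, b, c, d} : Finset V) :=
    hRef ▸ Finset.mem_insert_of_mem (Finset.mem_singleton_self _)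
  simp only [Finset.mem_sdiff, Finset.mem_insert, Finset.mem_singleton, not_or] at he hf
  refine ⟨a, b, c, d, e, f, hab', hac, had, (fun h => he.2.1 h.symm), (fun h => hf.2.1 h.symm),
    hbc, hbd, (fun h => he.2.2.1 h.symm), (fun h => hf.2.2.1 h.symm), hcd',
    (fun h => he.2.2.2.1 h.symm), (fun h => hf.2.2.2.1 h.symm),
    (fun h => he.2.2.2.2 h.symm), (fun h => hf.2.2.2.2 h.symm), hef, ?_, ?_⟩
  · intro w
    by_cases hw : w ∈ ({a, b, c, d} : Finset V)
    · simp only [Finset.mem_insert, Finset.mem_singleton] at hw; tauto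
    · have : w ∈ univ \ ({a, b, c, d} : Finset V) := Finset.mem_sdiff.2 ⟨Finset.mem_univ _, hw⟩
      rw [hRef] at this
      simp only [Finset.mem_insert, Finset.mem_singleton] at this; tauto
  · intro u w
    constructor
    · intro huw
      have : s(u, w) ∈ H.edgeFinset := mem_edgeFinset.2 (H.mem_edgeSet.2 huw)
      rw [hE] at this
      simp only [Finset.mem_insert, Finset.mem_singleton, Sym2.eq_iff] at this
      rcases this with (h | h) | (h | h)
      exacts [Or.inl h, Or.inr (Or.inl h), Or.inr (Or.inr (Or.inl h)),
        Or.inr (Or.inr (Or.inr h))]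
    · rintro (⟨rfl, rfl⟩ | ⟨rfl, rfl⟩ | ⟨rfl, rfl⟩ | ⟨rfl, rfl⟩)
      exacts [hab, hab.symm, hcd, hcd.symm]

lemma stmt18_inj_helper {V : Type*} (a b c d e f : V) (hab : a ≠ b) (hac : a ≠ c)
    (had : a ≠ d) (hae : a ≠ e) (haf : a ≠ f) (hbc : b ≠ c) (hbd : b ≠ d) (hbe : b ≠ e)
    (hbf : b ≠ f) (hcd : c ≠ d) (hce : c ≠ e) (hcf : c ≠ f) (hde : d ≠ e) (hdf : d ≠ f)
    (hef : e ≠ f) : Function.Injective (Sum.elim ![a, b] ![c, d, e, f]) := by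
  intro x y h
  rcases x with x | x <;> rcases y with y | y <;> fin_cases x <;> fin_cases y <;> simp_all

open SimpleGraph Finset Sum in
lemma stmt18_part1 {V : Type u} [Fintype V] (F : SimpleGraph V)
    (hd : ∀ v : V, 4 ≤ (F.neighborSet v).ncard) (he : F.edgeSet.ncard = 13) :
    Nonempty (F ≃g K2barJoinK4minus) := by
  classical
  have hdeg : ∀ v, 4 ≤ F.degree v := fun v => by rw [← stmt18_ncard_nbhd]; exact hd v
  have hsum : ∑ v, F.degree v = 26 := by
    rw [F.sum_degrees_eq_twice_card_edges, ← stmt18_ncard_edges, he]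
  have hlow : 4 * Fintype.card V ≤ 26 := by
    rw [← hsum, ← Finset.card_univ, mul_comm]
    exact Finset.card_nsmul_le_sum univ _ 4 (fun w _ => hdeg w)
  have hn6 : Fintype.card V ≤ 6 := by omega
  have hdegle : ∀ w, F.degree w ≤ 5 := fun w => by
    have := F.degree_lt_card_verts w; omega
  have hhigh : 26 ≤ Fintype.card V * 5 := by
    rw [← hsum, ← Finset.card_univ]
    exact Finset.sum_le_card_nsmul univ _ 5 (fun w _ => hdegle w)
  have hcard : Fintype.card V = 6 := by omega
  -- the complement graph
  have hcdegeq : ∀ w : V, Fᶜ.degree w + F.degree w = 5 := by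
    intro w
    rw [degree_compl, hcard]
    have := hdegle w
    omega
  have hcdeg : ∀ w : V, Fᶜ.degree w ≤ 1 := fun w => by
    have h1 := hcdegeq w; have h2 := hdeg w; omega
  have hcsum : ∑ w, Fᶜ.degree w = 4 := by
    have : ∑ w, (Fᶜ.degree w + F.degree w) = 30 := by
      rw [Finset.sum_congr rfl (fun w _ => hcdegeq w), Finset.sum_const, Finset.card_univ,
        hcard]
      norm_num
    rw [Finset.sum_add_distrib, hsum] at this
    omega
  have hcedge : Fᶜ.edgeFinset.card = 2 := by
    have := Fᶜ.sum_degrees_eq_twice_card_edges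
    omega
  obtain ⟨a, b, c, d, e, f, hab, hac, had, hae, haf, hbc, hbd, hbe, hbf, hcd, hce, hcf,
    hde, hdf, hef, hcover, hadj⟩ := stmt18_matching_struct Fᶜ hcard hcdeg hcedge
  have hFadj : ∀ u w : V, F.Adj u w ↔ u ≠ w ∧ ¬ Fᶜ.Adj u w := by
    intro u w
    rw [compl_adj]
    push_neg
    constructor
    · exact fun h => ⟨h.ne, fun _ => h⟩
    · rintro ⟨h1, h2⟩; exact h2 h1
  set g : Fin 2 ⊕ Fin 4 → V := Sum.elim ![a, b] ![c, d, e, f] with hg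
  have ginj : Function.Injective g :=
    stmt18_inj_helper a b c d e f hab hac had hae haf hbc hbd hbe hbf hcd hce hcf hde hdf hef
  have gsurj : Function.Surjective g := by
    intro w
    rcases hcover w with rfl | rfl | rfl | rfl | rfl | rfl
    exacts [⟨inl 0, by simp [hg]⟩, ⟨inl 1, by simp [hg]⟩, ⟨inr 0, by simp [hg]⟩,
      ⟨inr 1, by simp [hg]⟩, ⟨inr 2, by simp [hg]⟩, ⟨inr 3, by simp [hg]⟩]
  refine ⟨SimpleGraph.Iso.symm ⟨Equiv.ofBijective g ⟨ginj, gsurj⟩, ?_⟩⟩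
  intro x y
  show F.Adj (g x) (g y) ↔ K2barJoinK4minus.Adj x y
  rw [hFadj, hadj, stmt18_Gadj]
  rw [show a = g (inl 0) from by simp [hg], show b = g (inl 1) from by simp [hg],
    show c = g (inr 0) from by simp [hg], show d = g (inr 1) from by simp [hg]]
  simp only [ginj.eq_iff, ginj.ne_iff]

open SimpleGraph Finset in
lemma stmt18_part2 {V : Type v} [Fintype V] (F : SimpleGraph V)
    (hd : ∀ v : V, 5 ≤ (F.neighborSet v).ncard) (he : F.edgeSet.ncard = 16) : False := by
  classical
  have hsum : ∑ w, F.degree w = 32 := by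
    rw [F.sum_degrees_eq_twice_card_edges, ← stmt18_ncard_edges, he]
  have hlow : 5 * Fintype.card V ≤ 32 := by
    rw [← hsum, ← Finset.card_univ, mul_comm]
    exact Finset.card_nsmul_le_sum univ _ 5
      (fun w _ => by rw [← stmt18_ncard_nbhd]; exact hd w)
  have hn : Fintype.card V ≤ 6 := by omega
  have hhigh : ∑ w, F.degree w ≤ Fintype.card V * 5 := by
    rw [← Finset.card_univ]
    exact Finset.sum_le_card_nsmul univ _ 5
      (fun w _ => by have := F.degree_lt_card_verts w; omega)
  omega

/-- A finite simple graph with no isolated vertices, minimum degree at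
least 4 and exactly 13 edges is isomorphic to `K̄_2 ∨ K_4⁻`; moreover there is no finite
simple graph with no isolated vertices, minimum degree at least 5 and exactly 16 edges. -/
theorem stmt18 :
    (∀ {V : Type u} [Fintype V] (F : SimpleGraph V),
      (∀ v : V, 4 ≤ (F.neighborSet v).ncard) → F.edgeSet.ncard = 13 →
        Nonempty (F ≃g K2barJoinK4minus)) ∧
    (∀ {V : Type v} [Fintype V] (F : SimpleGraph V),
      (∀ v : V, 5 ≤ (F.neighborSet v).ncard) → F.edgeSet.ncard = 16 → False) := by
  exact ⟨fun {V} _ F hd he => stmt18_part1 F hd he,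
    fun {V} _ F hd he => stmt18_part2 F hd he⟩
end
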